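/- arXiv:2410.02480 — 6 statements merged into one kernel-verified Lean document; each statement's English description precedes it below -/
import Mathlib

section
/- Let f be an arithmetic function of two variables and g a C^1 function on [0,∞)^2. For real x1, x2 ≥ 1, writing S(x1,x2;f) = Σ_{1≤n1≤x1} Σ_{1≤n2≤x2} f(n1,n2), one has S(x1,x2; f·g) = g(x1,x2) S(x1,x2;f) − ∫_0^{x1} S(t1,x2;f) ∂₁g(t1,x2) dt1 − ∫_0^{x2} S(x1,t2;f) ∂₂g(x1,t2) dt2 + ∫_0^{x1} ∫_0^{x2} S(t1,t2;f) ∂₁∂₂g(t1,t2) dt1 dt2. -/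
/-!
Apply one-variable Abel summation (`sum_mul_eq_sub_integral_mul`) in `n1` for each fixed `n2`,
then once more in `n2` to each of the two resulting terms: to `g x1 ·` for the boundary term, and,
under the `t1`-integral, to `g1 t1 ·`, whose derivative is `g12 t1 ·`.
-/

open MeasureTheory Finset

section AbelSummation

variable {𝕜 : Type*} [RCLike 𝕜]

theorem sum_Icc_zero_ite_eq_sum_Icc_one (φ : ℕ → 𝕜) (m : ℕ) :
    ∑ k ∈ Icc 0 m, (if k = 0 then 0 else φ k) = ∑ k ∈ Icc 1 m, φ k := by
  rw [Icc_eq_cons_Ioc (Nat.zero_le m), sum_cons, if_pos rfl, zero_add,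
    ← Icc_add_one_left_eq_Ioc]
  exact sum_congr rfl fun k hk => if_neg (by simp at hk; omega)

theorem intervalIntegrable_sum_Icc_one_mul (c : ℕ → 𝕜) {h : ℝ → 𝕜} {x : ℝ} (hx : 0 ≤ x)
    (hh : IntegrableOn h (Set.Icc 0 x)) :
    IntervalIntegrable (fun t => (∑ n ∈ Icc 1 ⌊t⌋₊, c n) * h t) volume 0 x :=
  (intervalIntegrable_iff_integrableOn_Icc_of_le hx).2 <|
    (integrableOn_mul_sum_Icc c le_rfl hh).congr_fun (fun _ _ => mul_comm _ _) measurableSet_Icc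

theorem sum_Icc_one_mul_eq_sub_integral_mul (c : ℕ → 𝕜) {G G' : ℝ → 𝕜} {x : ℝ} (hx : 0 ≤ x)
    (hG : ∀ t ∈ Set.Icc 0 x, HasDerivAt G (G' t) t) (hG' : IntegrableOn G' (Set.Icc 0 x)) :
    ∑ n ∈ Icc 1 ⌊x⌋₊, c n * G n =
      (∑ n ∈ Icc 1 ⌊x⌋₊, c n) * G x - ∫ t in (0)..x, (∑ n ∈ Icc 1 ⌊t⌋₊, c n) * G' t := by
  have hderiv : Set.EqOn (deriv G) G' (Set.Icc 0 x) := fun t ht => (hG t ht).deriv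
  have abel := sum_mul_eq_sub_integral_mul (fun k => if k = 0 then 0 else c k) hx
    (fun t ht => (hG t ht).differentiableAt) (hG'.congr_fun hderiv.symm measurableSet_Icc)
  simp only [mul_ite, mul_zero, sum_Icc_zero_ite_eq_sum_Icc_one] at abel
  rw [mul_comm _ (G x), intervalIntegral.integral_of_le hx,
    sum_congr rfl fun n _ => mul_comm (c n) (G n), abel,
    setIntegral_congr_fun measurableSet_Ioc fun t ht => by
      rw [hderiv (Set.Ioc_subset_Icc_self ht), mul_comm]]

theorem ContinuousOn.integrableOn_Icc_uncurry_left {G : ℝ → ℝ → 𝕜} {s : Set ℝ} {a : ℝ}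
    (hG : ContinuousOn (Function.uncurry G) (s ×ˢ Set.Ici 0)) (ha : a ∈ s) (x : ℝ) :
    IntegrableOn (G a) (Set.Icc 0 x) :=
  ((hG.uncurry_left a ha).mono Set.Icc_subset_Ici_self).integrableOn_Icc

theorem ContinuousOn.integrableOn_Icc_uncurry_right {G : ℝ → ℝ → 𝕜} {s : Set ℝ} {b : ℝ}
    (hG : ContinuousOn (Function.uncurry G) (Set.Ici 0 ×ˢ s)) (hb : b ∈ s) (x : ℝ) :
    IntegrableOn (fun t => G t b) (Set.Icc 0 x) :=
  ((hG.uncurry_right b hb).mono Set.Icc_subset_Ici_self).integrableOn_Icc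

end AbelSummation

section DoublePartialSum

variable {𝕜 : Type*} [RCLike 𝕜] (f : ℕ → ℕ → 𝕜)

noncomputable def doublePartialSum (x1 x2 : ℝ) : 𝕜 :=
  ∑ n1 ∈ Icc 1 ⌊x1⌋₊, ∑ n2 ∈ Icc 1 ⌊x2⌋₊, f n1 n2

theorem doublePartialSum_eq_sum_sum_swap (x1 x2 : ℝ) :
    doublePartialSum f x1 x2 = ∑ n2 ∈ Icc 1 ⌊x2⌋₊, ∑ n1 ∈ Icc 1 ⌊x1⌋₊, f n1 n2 :=
  sum_comm

theorem sum_colSum_mul_eq_sub_integral_mul {G G' : ℝ → 𝕜} (x1 : ℝ) {x2 : ℝ} (hx2 : 0 ≤ x2)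
    (hG : ∀ t ∈ Set.Icc 0 x2, HasDerivAt G (G' t) t) (hG' : IntegrableOn G' (Set.Icc 0 x2)) :
    ∑ n2 ∈ Icc 1 ⌊x2⌋₊, (∑ n1 ∈ Icc 1 ⌊x1⌋₊, f n1 n2) * G n2 =
      doublePartialSum f x1 x2 * G x2 -
        ∫ t2 in (0)..x2, doublePartialSum f x1 t2 * G' t2 := by
  simp only [doublePartialSum_eq_sum_sum_swap]
  exact sum_Icc_one_mul_eq_sub_integral_mul _ hx2 hG hG'

theorem sum_integral_colSum_mul_eq_sub_integral {h h' : ℝ → ℝ → 𝕜} {x1 x2 : ℝ}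
    (hx1 : 0 ≤ x1) (hx2 : 0 ≤ x2)
    (hd : ∀ t1 t2 : ℝ, 0 ≤ t1 → 0 ≤ t2 → HasDerivAt (h t1) (h' t1 t2) t2)
    (hc : ContinuousOn (Function.uncurry h) (Set.Ici 0 ×ˢ Set.Ici 0))
    (hc' : ContinuousOn (Function.uncurry h') (Set.Ici 0 ×ˢ Set.Ici 0)) :
    ∑ n2 ∈ Icc 1 ⌊x2⌋₊, ∫ t1 in (0)..x1, (∑ n1 ∈ Icc 1 ⌊t1⌋₊, f n1 n2) * h t1 n2 =
      (∫ t1 in (0)..x1, doublePartialSum f t1 x2 * h t1 x2) -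
        ∫ t1 in (0)..x1, ∫ t2 in (0)..x2, doublePartialSum f t1 t2 * h' t1 t2 := by
  have hcol : ∀ n2 : ℕ, IntervalIntegrable
      (fun t1 => (∑ n1 ∈ Icc 1 ⌊t1⌋₊, f n1 n2) * h t1 n2) volume 0 x1 := fun n2 =>
    intervalIntegrable_sum_Icc_one_mul _ hx1
      (hc.integrableOn_Icc_uncurry_right (Set.mem_Ici.2 n2.cast_nonneg) x1)
  have hsum : IntervalIntegrable
      (fun t1 => ∑ n2 ∈ Icc 1 ⌊x2⌋₊, (∑ n1 ∈ Icc 1 ⌊t1⌋₊, f n1 n2) * h t1 n2) volume 0 x1 := by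
    simpa only [← sum_fn] using IntervalIntegrable.sum _ fun n2 _ => hcol n2
  have hbdry : IntervalIntegrable (fun t1 => doublePartialSum f t1 x2 * h t1 x2) volume 0 x1 :=
    intervalIntegrable_sum_Icc_one_mul _ hx1
      (hc.integrableOn_Icc_uncurry_right (Set.mem_Ici.2 hx2) x1)
  -- Abel summation in `n2` writes the inner integral as the boundary term minus an integrable
  -- step sum, so its own integrability in `t1` is never needed.
  have habel : ∀ t1 ∈ Set.uIcc 0 x1,
      ∑ n2 ∈ Icc 1 ⌊x2⌋₊, (∑ n1 ∈ Icc 1 ⌊t1⌋₊, f n1 n2) * h t1 n2 =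
        doublePartialSum f t1 x2 * h t1 x2 -
          ∫ t2 in (0)..x2, doublePartialSum f t1 t2 * h' t1 t2 := by
    intro t1 ht1
    rw [Set.uIcc_of_le hx1] at ht1
    exact sum_colSum_mul_eq_sub_integral_mul f t1 hx2 (fun t ht => hd t1 t ht1.1 ht.1)
      (hc'.integrableOn_Icc_uncurry_left (Set.mem_Ici.2 ht1.1) x2)
  rw [← intervalIntegral.integral_finsetSum fun n2 _ => hcol n2, eq_sub_iff_add_eq',
    ← eq_sub_iff_add_eq, ← intervalIntegral.integral_sub hbdry hsum]
  exact intervalIntegral.integral_congr fun t1 ht1 => by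
    simp only [habel t1 ht1, sub_sub_cancel]

end DoublePartialSum

/-- Two-dimensional Abel summation: `S x1 x2 f` is the double partial sum of `f`. -/
theorem abel_summation_two_variables
    (f : ℕ → ℕ → ℂ) (g g1 g2 g12 : ℝ → ℝ → ℂ)
    (S : ℝ → ℝ → ℂ)
    (hS : ∀ x1 x2 : ℝ, S x1 x2 =
      ∑ n1 ∈ Finset.Icc 1 ⌊x1⌋₊, ∑ n2 ∈ Finset.Icc 1 ⌊x2⌋₊, f n1 n2)
    (hg1 : ∀ t1 t2 : ℝ, 0 ≤ t1 → 0 ≤ t2 →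
      HasDerivAt (fun t => g t t2) (g1 t1 t2) t1)
    (hg2 : ∀ t1 t2 : ℝ, 0 ≤ t1 → 0 ≤ t2 →
      HasDerivAt (fun t => g t1 t) (g2 t1 t2) t2)
    (hg12 : ∀ t1 t2 : ℝ, 0 ≤ t1 → 0 ≤ t2 →
      HasDerivAt (fun t => g1 t1 t) (g12 t1 t2) t2)
    (hc1 : ContinuousOn (fun p : ℝ × ℝ => g1 p.1 p.2) (Set.Ici 0 ×ˢ Set.Ici 0))
    (hc2 : ContinuousOn (fun p : ℝ × ℝ => g2 p.1 p.2) (Set.Ici 0 ×ˢ Set.Ici 0))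
    (hc12 : ContinuousOn (fun p : ℝ × ℝ => g12 p.1 p.2) (Set.Ici 0 ×ˢ Set.Ici 0))
    (x1 x2 : ℝ) (hx1 : 1 ≤ x1) (hx2 : 1 ≤ x2) :
    (∑ n1 ∈ Finset.Icc 1 ⌊x1⌋₊, ∑ n2 ∈ Finset.Icc 1 ⌊x2⌋₊,
        f n1 n2 * g (n1 : ℝ) (n2 : ℝ))
      = g x1 x2 * S x1 x2
        - (∫ t1 in (0:ℝ)..x1, S t1 x2 * g1 t1 x2)
        - (∫ t2 in (0:ℝ)..x2, S x1 t2 * g2 x1 t2)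
        + ∫ t1 in (0:ℝ)..x1, ∫ t2 in (0:ℝ)..x2, S t1 t2 * g12 t1 t2 := by
  obtain rfl : S = doublePartialSum f := funext₂ hS
  have h01 : (0:ℝ) ≤ x1 := by linarith
  have h02 : (0:ℝ) ≤ x2 := by linarith
  have abel_n1 : ∀ n2 : ℕ, ∑ n1 ∈ Icc 1 ⌊x1⌋₊, f n1 n2 * g n1 n2 =
      (∑ n1 ∈ Icc 1 ⌊x1⌋₊, f n1 n2) * g x1 n2 -
        ∫ t1 in (0)..x1, (∑ n1 ∈ Icc 1 ⌊t1⌋₊, f n1 n2) * g1 t1 n2 := fun n2 =>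
    sum_Icc_one_mul_eq_sub_integral_mul _ h01 (fun t ht => hg1 t n2 ht.1 n2.cast_nonneg)
      (hc1.integrableOn_Icc_uncurry_right (Set.mem_Ici.2 n2.cast_nonneg) x1)
  have abel_n2 := sum_colSum_mul_eq_sub_integral_mul f x1 h02
    (fun t ht => hg2 x1 t h01 ht.1) (hc2.integrableOn_Icc_uncurry_left (Set.mem_Ici.2 h01) x2)
  rw [sum_comm, sum_congr rfl fun n2 _ => abel_n1 n2, sum_sub_distrib, abel_n2,
    sum_integral_colSum_mul_eq_sub_integral f h01 h02 hg12 hc1 hc12]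
  ring
end

section
/- For an integer h ≥ 2 and any real t1, ∫_{-1/2}^{1/2} E_h⁺(t2) E_h⁺(t2 + t1) dt2 ≪ E_h⁺(t1) log h, where E_h⁺(t) = 1/(1/h + ‖t‖) and ‖·‖ is the distance to the nearest integer. -/
/-- `‖t‖`: the distance from `t` to the nearest integer. -/
noncomputable def nint (t : ℝ) : ℝ := |t - round t|

/-- `E_h⁺(t) = 1/(1/h + ‖t‖)`. -/
noncomputable def Ehp (h : ℕ) (t : ℝ) : ℝ := 1 / (1 / (h : ℝ) + nint t)

lemma nint_nonneg (t : ℝ) : 0 ≤ nint t := abs_nonneg _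

lemma nint_le_int (t : ℝ) (n : ℤ) : nint t ≤ |t - n| := by
  rcases eq_or_ne n (round t) with rfl | hn
  · exact le_of_eq rfl
  · have h1 : (1:ℝ) ≤ |(round t : ℝ) - n| := by
      have : round t - n ≠ 0 := sub_ne_zero.mpr (Ne.symm hn)
      exact_mod_cast Int.one_le_abs this
  -- |round t - n| ≤ |t - n| + |t - round t|
    have h2 : |t - round t| ≤ 1/2 := abs_sub_round t
    have h3 : |(round t : ℝ) - n| ≤ |t - n| + |t - round t| := by
      have := abs_sub (t - (n:ℝ)) (t - (round t : ℝ))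
      calc |(round t : ℝ) - n| = |(t - n) - (t - round t)| := by ring_nf
        _ ≤ |t - n| + |t - round t| := abs_sub _ _
    have : (1:ℝ)/2 ≤ |t - n| := by linarith
    calc nint t ≤ 1/2 := abs_sub_round t
      _ ≤ |t - n| := this

lemma nint_sub_le (x y : ℝ) : nint (x - y) ≤ nint x + nint y := by
  have h := nint_le_int (x - y) (round x - round y)
  calc nint (x - y) ≤ |(x - y) - ((round x : ℤ) - round y : ℤ)| := h
    _ = |(x - round x) - (y - round y)| := by push_cast; ring_nf
    _ ≤ |x - round x| + |y - round y| := abs_sub _ _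
    _ = nint x + nint y := rfl

lemma nint_periodic : Function.Periodic nint 1 := by
  intro t
  unfold nint
  rw [show t + 1 = t + (1:ℤ) by norm_num, round_add_intCast]
  push_cast
  ring_nf

lemma measurable_nint : Measurable nint := by
  have hr : Measurable fun t : ℝ => (round t : ℝ) := by
    have : Measurable (round : ℝ → ℤ) := by
      have : (round : ℝ → ℤ) = fun t => ⌊t + 1/2⌋ := by
        funext t; exact round_eq t
      rw [this]
      exact Int.measurable_floor.comp (measurable_id.add_const _)
    exact measurable_from_top.comp this
  exact (measurable_id.sub hr).abs

lemma measurable_Ehp (h : ℕ) : Measurable (Ehp h) :=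
  measurable_const.div (measurable_const.add measurable_nint)

lemma denom_pos {h : ℕ} (hh : 2 ≤ h) (t : ℝ) : 0 < 1 / (h : ℝ) + nint t := by
  have : (0:ℝ) < h := by positivity
  have := nint_nonneg t
  positivity

lemma Ehp_pos {h : ℕ} (hh : 2 ≤ h) (t : ℝ) : 0 < Ehp h t :=
  div_pos one_pos (denom_pos hh t)

lemma Ehp_le {h : ℕ} (hh : 2 ≤ h) (t : ℝ) : Ehp h t ≤ h := by
  rw [Ehp, div_le_iff₀ (denom_pos hh t)]
  have h0 : (0:ℝ) < h := by positivity
  have h1 := nint_nonneg t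
  have : (h:ℝ) * (1/h) = 1 := by field_simp
  nlinarith

lemma Ehp_periodic (h : ℕ) : Function.Periodic (Ehp h) 1 := by
  intro t; unfold Ehp; rw [nint_periodic t]

lemma Ehp_intervalIntegrable {h : ℕ} (hh : 2 ≤ h) (c a b : ℝ) :
    IntervalIntegrable (fun t => Ehp h (t + c)) MeasureTheory.volume a b := by
  apply IntervalIntegrable.mono_fun' (g := fun _ => (h:ℝ)) intervalIntegrable_const
  · exact ((measurable_Ehp h).comp (measurable_id.add_const c)).aestronglyMeasurable
  · apply Filter.Eventually.of_forall
    intro t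
    simp only [Real.norm_eq_abs]
    rw [abs_of_pos (Ehp_pos hh _)]
    exact Ehp_le hh _

-- pointwise key inequality
lemma Ehp_mul_le {h : ℕ} (hh : 2 ≤ h) (t1 t2 : ℝ) :
    Ehp h t2 * Ehp h (t2 + t1) ≤ Ehp h t1 * (Ehp h t2 + Ehp h (t2 + t1)) := by
  set a := 1 / (h : ℝ) + nint t2 with ha
  set b := 1 / (h : ℝ) + nint (t2 + t1) with hb
  set c := 1 / (h : ℝ) + nint t1 with hc
  have hap : 0 < a := denom_pos hh t2
  have hbp : 0 < b := denom_pos hh (t2 + t1)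
  have hcp : 0 < c := denom_pos hh t1
  have hkey : c ≤ a + b := by
    have h1 : nint t1 ≤ nint (t2 + t1) + nint t2 := by
      have := nint_sub_le (t2 + t1) t2
      simpa using this
    have h2 : (0:ℝ) < 1 / h := by positivity
    rw [ha, hb, hc]; linarith
  show 1/a * (1/b) ≤ 1/c * (1/a + 1/b)
  rw [div_mul_div_comm, one_mul]
  rw [div_le_iff₀ (by positivity)]
  have : 1/c * (1/a + 1/b) = (a + b) / (c * a * b) := by field_simp; ring
  rw [this]
  rw [div_mul_eq_mul_div, le_div_iff₀ (by positivity)]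
  nlinarith [mul_le_mul_of_nonneg_right hkey (mul_pos hap hbp).le]

lemma nint_eq_abs {t : ℝ} (h1 : -(1:ℝ)/2 ≤ t) (h2 : t ≤ 1/2) : nint t = |t| := by
  rcases eq_or_lt_of_le h2 with rfl | h2'
  · unfold nint
    norm_num [round_eq]
  · have : round t = 0 := by
      rw [round_eq]
      apply Int.floor_eq_zero_iff.mpr
      constructor <;> [skip; skip] <;> simp at *
      all_goals linarith
    unfold nint
    rw [this]
    norm_num

lemma integral_Ehp_le {h : ℕ} (hh : 2 ≤ h) :
    (∫ t in (-(1:ℝ)/2)..(1/2), Ehp h t) ≤ 2 * Real.log h := by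
  have hhp : (0:ℝ) < h := by positivity
  have heq : (∫ t in (-(1:ℝ)/2)..(1/2), Ehp h t)
      = ∫ t in (-(1:ℝ)/2)..(1/2), 1 / (1/(h:ℝ) + |t|) := by
    apply intervalIntegral.integral_congr
    intro t ht
    rw [Set.uIcc_of_le (by norm_num)] at ht
    unfold Ehp
    rw [nint_eq_abs ht.1 ht.2]
  rw [heq]
  have hsplit : (∫ t in (-(1:ℝ)/2)..(1/2), 1 / (1/(h:ℝ) + |t|))
      = (∫ t in (-(1:ℝ)/2)..(0:ℝ), 1 / (1/(h:ℝ) + |t|))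
        + ∫ t in (0:ℝ)..(1/2), 1 / (1/(h:ℝ) + |t|) := by
    rw [intervalIntegral.integral_add_adjacent_intervals]
    · apply IntervalIntegrable.mono_fun' (g := fun _ => (h:ℝ)) intervalIntegrable_const
      · exact (measurable_const.div (measurable_const.add measurable_abs)).aestronglyMeasurable
      · apply Filter.Eventually.of_forall
        intro t
        have h1 : (0:ℝ) < 1/(h:ℝ) + |t| := by positivity
        simp only [Real.norm_eq_abs]
        rw [abs_of_pos (by positivity), div_le_iff₀ h1]
        have : (h:ℝ) * (1/h) = 1 := by field_simp
        nlinarith [abs_nonneg t]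
    · apply IntervalIntegrable.mono_fun' (g := fun _ => (h:ℝ)) intervalIntegrable_const
      · exact (measurable_const.div (measurable_const.add measurable_abs)).aestronglyMeasurable
      · apply Filter.Eventually.of_forall
        intro t
        have h1 : (0:ℝ) < 1/(h:ℝ) + |t| := by positivity
        simp only [Real.norm_eq_abs]
        rw [abs_of_pos (by positivity), div_le_iff₀ h1]
        have : (h:ℝ) * (1/h) = 1 := by field_simp
        nlinarith [abs_nonneg t]
  have hneg : (∫ t in (-(1:ℝ)/2)..(0:ℝ), 1 / (1/(h:ℝ) + |t|))
      = ∫ t in (0:ℝ)..(1/2), 1 / (1/(h:ℝ) + |t|) := by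
    have := intervalIntegral.integral_comp_neg (a := (0:ℝ)) (b := 1/2)
      (fun t => 1 / (1/(h:ℝ) + |t|))
    simp only [abs_neg] at this
    rw [this]
    norm_num
  have hval : (∫ t in (0:ℝ)..(1/2), 1 / (1/(h:ℝ) + |t|)) ≤ Real.log h := by
    have heq2 : (∫ t in (0:ℝ)..(1/2), 1 / (1/(h:ℝ) + |t|))
        = ∫ t in (0:ℝ)..(1/2), 1 / (t + 1/(h:ℝ)) := by
      apply intervalIntegral.integral_congr
      intro t ht
      rw [Set.uIcc_of_le (by norm_num)] at ht
      simp only []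
      rw [abs_of_nonneg ht.1, add_comm]
    rw [heq2]
    have heq3 : (∫ t in (0:ℝ)..(1/2), 1 / (t + 1/(h:ℝ)))
        = ∫ x in (0 + 1/(h:ℝ))..(1/2 + 1/(h:ℝ)), 1 / x :=
      intervalIntegral.integral_comp_add_right (fun x => 1/x) (1/(h:ℝ))
    rw [heq3, integral_one_div]
    · have harg : (1/2 + 1/(h:ℝ)) / (0 + 1/(h:ℝ)) = (h:ℝ)/2 + 1 := by
        field_simp
        ring
      rw [harg]
      apply Real.log_le_log (by positivity)
      have : (2:ℝ) ≤ h := by exact_mod_cast hh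
      linarith
    · intro hmem
      rw [Set.uIcc_of_le (by norm_num [hhp.le])] at hmem
      have := hmem.1
      have : (0:ℝ) < 1/(h:ℝ) := by positivity
      linarith [hmem.1]
  calc (∫ t in (-(1:ℝ)/2)..(1/2), 1 / (1/(h:ℝ) + |t|))
      = 2 * ∫ t in (0:ℝ)..(1/2), 1 / (1/(h:ℝ) + |t|) := by rw [hsplit, hneg]; ring
    _ ≤ 2 * Real.log h := by linarith

theorem integral_Ehp_shift_le :
    ∃ C > 0, ∀ h : ℕ, 2 ≤ h → ∀ t1 : ℝ,
      (∫ t2 in (-(1:ℝ)/2)..(1/2), Ehp h t2 * Ehp h (t2 + t1))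
        ≤ C * Ehp h t1 * Real.log h := by
  refine ⟨4, by norm_num, fun h hh t1 => ?_⟩
  have hhp : (0:ℝ) < h := by positivity
  have hint1 : IntervalIntegrable (fun t => Ehp h t) MeasureTheory.volume (-(1:ℝ)/2) (1/2) := by
    simpa using Ehp_intervalIntegrable hh 0 (-(1:ℝ)/2) (1/2)
  have hint2 : IntervalIntegrable (fun t => Ehp h (t + t1)) MeasureTheory.volume (-(1:ℝ)/2) (1/2) :=
    Ehp_intervalIntegrable hh t1 _ _
  have hintprod : IntervalIntegrable (fun t => Ehp h t * Ehp h (t + t1))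
      MeasureTheory.volume (-(1:ℝ)/2) (1/2) := by
    apply IntervalIntegrable.mono_fun' (g := fun _ => (h:ℝ) * h)
      intervalIntegrable_const
    · exact ((measurable_Ehp h).mul
        ((measurable_Ehp h).comp (measurable_id.add_const t1))).aestronglyMeasurable
    · apply Filter.Eventually.of_forall
      intro t
      simp only [Real.norm_eq_abs]
      rw [abs_of_pos (mul_pos (Ehp_pos hh _) (Ehp_pos hh _))]
      exact mul_le_mul (Ehp_le hh _) (Ehp_le hh _) (Ehp_pos hh _).le hhp.le
  have hmono : (∫ t2 in (-(1:ℝ)/2)..(1/2), Ehp h t2 * Ehp h (t2 + t1))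
      ≤ ∫ t2 in (-(1:ℝ)/2)..(1/2), Ehp h t1 * (Ehp h t2 + Ehp h (t2 + t1)) := by
    apply intervalIntegral.integral_mono_on (by norm_num) hintprod
    · exact ((hint1.add hint2).const_mul _)
    · intro t ht
      exact Ehp_mul_le hh t1 t
  have hshift : (∫ t2 in (-(1:ℝ)/2)..(1/2), Ehp h (t2 + t1))
      = ∫ t2 in (-(1:ℝ)/2)..(1/2), Ehp h t2 := by
    rw [intervalIntegral.integral_comp_add_right (fun x => Ehp h x) t1]
    have := (Ehp_periodic h).intervalIntegral_add_eq (-(1:ℝ)/2 + t1) (-(1:ℝ)/2)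
    norm_num at this ⊢
    convert this using 2 <;> ring
  have hsum : (∫ t2 in (-(1:ℝ)/2)..(1/2), Ehp h t1 * (Ehp h t2 + Ehp h (t2 + t1)))
      = Ehp h t1 * ((∫ t2 in (-(1:ℝ)/2)..(1/2), Ehp h t2)
        + ∫ t2 in (-(1:ℝ)/2)..(1/2), Ehp h (t2 + t1)) := by
    rw [intervalIntegral.integral_const_mul, intervalIntegral.integral_add hint1 hint2]
  have hI := integral_Ehp_le hh
  have hE1 : 0 < Ehp h t1 := Ehp_pos hh t1
  calc (∫ t2 in (-(1:ℝ)/2)..(1/2), Ehp h t2 * Ehp h (t2 + t1))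
      ≤ Ehp h t1 * ((∫ t2 in (-(1:ℝ)/2)..(1/2), Ehp h t2)
        + ∫ t2 in (-(1:ℝ)/2)..(1/2), Ehp h (t2 + t1)) := by rw [← hsum]; exact hmono
    _ = Ehp h t1 * (2 * ∫ t2 in (-(1:ℝ)/2)..(1/2), Ehp h t2) := by rw [hshift]; ring
    _ ≤ Ehp h t1 * (2 * (2 * Real.log h)) := by
        apply mul_le_mul_of_nonneg_left _ hE1.le
        linarith
    _ = 4 * Ehp h t1 * Real.log h := by ring
end

section
/- Let a, q, m be positive integers with gcd(a, qm) = 1 and gcd(q, m) = 1, and let X ≥ 1. Then Σ_{1≤n≤X, n ≡ a (mod q), gcd(n,m)=1} μ(n)² n²/φ(n)² ≪ min{ X/q + (log 3X)², (X/q + 1)(log log 3X)² }, with an absolute implied constant. -/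
/-!
As `μ(n)² ≤ 1`, it suffices to bound `∑ (n / φ(n))²` over `n ≤ X`, `n ≡ a (mod q)`, where
`n / φ(n) = ∏_{p ∣ n} p / (p - 1)`.

For the bound `X / q + (log 3X)²`, write `(n / φ(n))² = ∏_{p ∣ n} (1 + g(p))` with
`g(p) = (2p - 1) / (p - 1)²` and expand it as a sum over sets `s` of primes dividing `n`. Since `a`
is coprime to `q`, so is `∏ s` whenever it divides some `n ≡ a`, and at most `X / (q ∏ s) + 1`
such `n ≤ X` are divisible by `∏ s`. Summing back over `s` gives
`(X / q) ∏_{p ≤ X} (1 + g(p) / p) + ∏_{p ≤ X} (p / (p - 1))²`: the first product is bounded as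
`g(p) / p ≪ 1 / p²`, the second is `≪ (log X)²` by Mertens' theorem.

For the bound `(X / q + 1) (log log 3X)²`, each of the at most `X / q + 1` terms is
`≪ (log log 3X)²`: splitting the primes dividing `n` at `ω(n) + 2`, Mertens' estimate
`∑_{p ≤ y} 1 / p ≤ log log y + O(1)` gives `n / φ(n) ≪ log (ω(n) + 2)`, and `2^ω(n) ≤ n`.

Mertens' estimates follow by partial summation from `∑_{p ≤ N} log p / p ≤ log N + log 4`, which
comes from Chebyshev's bound `θ(N) ≤ N log 4` and `∑_{d ≤ N} Λ(d) ⌊N / d⌋ = log N! ≤ N log N`.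
-/

open Finset Real
open scoped Nat ArithmeticFunction ArithmeticFunction.Moebius

lemma prod_one_add_le_exp_sum {ι : Type*} (s : Finset ι) {f : ι → ℝ} (hf : ∀ i ∈ s, -1 ≤ f i) :
    ∏ i ∈ s, (1 + f i) ≤ exp (∑ i ∈ s, f i) := by
  rw [exp_sum]
  exact prod_le_prod (fun i hi ↦ by linarith [hf i hi]) fun i _ ↦ by linarith [add_one_le_exp (f i)]

lemma one_sub_div_le_log_sub_log {a b : ℝ} (ha : 0 < a) (hb : 0 < b) :
    1 - a / b ≤ log b - log a := by
  simpa [inv_div, log_div hb.ne' ha.ne'] using one_sub_inv_le_log_of_pos (div_pos hb ha)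

lemma sum_primesLE_log_mul_div_le (N : ℕ) :
    ∑ p ∈ N.primesLE, log p * (N / p : ℕ) ≤ N * log N := by
  calc ∑ p ∈ N.primesLE, log p * (N / p : ℕ)
      ≤ ∑ n ∈ Ioc 0 N, Λ n * (N / n : ℕ) := by
        rw [Nat.primesLE_eq_filter_Ioc_zero, sum_filter]
        refine sum_le_sum fun n _ ↦ ?_
        split_ifs with hn
        · rw [ArithmeticFunction.vonMangoldt_apply_prime hn]
        · exact mul_nonneg ArithmeticFunction.vonMangoldt_nonneg (Nat.cast_nonneg _)
    _ = ∑ n ∈ Ioc 0 N, log n := by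
        rw [← ArithmeticFunction.sum_Ioc_mul_zeta_eq_sum, ArithmeticFunction.vonMangoldt_mul_zeta]
        simp only [ArithmeticFunction.log_apply]
    _ ≤ ∑ _n ∈ Ioc 0 N, log N :=
        sum_le_sum fun n hn ↦ log_le_log (by simp_all) (by simp_all)
    _ = N * log N := by simp

lemma sum_primesLE_log_div_le (N : ℕ) :
    ∑ p ∈ N.primesLE, log p / p ≤ log N + log 4 := by
  rcases N.eq_zero_or_pos with rfl | hN
  · simp only [Nat.primesLE_zero, sum_empty, Nat.cast_zero, log_zero, zero_add]
    positivity
  have hN' : (0 : ℝ) < N := by exact_mod_cast hN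
  rw [← mul_le_mul_iff_right₀ hN']
  calc (N : ℝ) * ∑ p ∈ N.primesLE, log p / p
      ≤ ∑ p ∈ N.primesLE, log p * ((N / p : ℕ) + 1) := by
        rw [mul_sum]
        refine sum_le_sum fun p _ ↦ ?_
        have hfloor : (N : ℝ) / p ≤ (N / p : ℕ) + 1 := by
          rw [← Nat.floor_div_eq_div (K := ℝ)]
          exact (Nat.lt_floor_add_one _).le
        calc (N : ℝ) * (log p / p) = log p * (N / p) := by ring
          _ ≤ _ := mul_le_mul_of_nonneg_left hfloor (log_natCast_nonneg p)
    _ = ∑ p ∈ N.primesLE, log p * (N / p : ℕ) + ∑ p ∈ N.primesLE, log p := by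
        simp only [mul_add, mul_one, sum_add_distrib]
    _ ≤ N * log N + log 4 * N := by
        gcongr
        · exact sum_primesLE_log_mul_div_le N
        · rw [← Chebyshev.theta_eq_sum_primesLE_log]
          exact Chebyshev.theta_le_log4_mul_x N.cast_nonneg
    _ = N * (log N + log 4) := by ring

lemma filter_prime_Ico_two_eq_primesLE (y : ℕ) : {n ∈ Ico 2 (y + 1) | n.Prime} = y.primesLE := by
  ext p
  simp only [mem_filter, mem_Ico, Nat.mem_primesLE]
  exact ⟨fun h ↦ ⟨by omega, h.2⟩, fun h ↦ ⟨⟨h.2.two_le, by omega⟩, h.2⟩⟩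

lemma neg_one_le_log_log_two : -1 ≤ log (log 2) := by
  have := one_sub_inv_le_log_of_pos (log_pos one_lt_two)
  have : (log 2)⁻¹ ≤ 2 := by
    rw [inv_le_comm₀ (log_pos one_lt_two) two_pos]
    linarith [log_two_gt_d9]
  linarith

-- The summation-by-parts step behind `∑_{p ≤ y} 1 / p ≤ log log y + 4`.
lemma inv_log_sub_inv_log_succ_mul_le {i : ℕ} (hi : 2 ≤ i) :
    ((log i)⁻¹ - (log ↑(i + 1))⁻¹) * ∑ p ∈ i.primesLE, log p / p
      ≤ (log (log ↑(i + 1)) - log 4 * (log ↑(i + 1))⁻¹) - (log (log i) - log 4 * (log i)⁻¹) := by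
  have h2 : (2 : ℝ) ≤ i := by exact_mod_cast hi
  have hlog : 0 < log i := log_pos (by linarith)
  have hlog' : 0 < log ↑(i + 1) := log_pos (by push_cast; linarith)
  have hanti : 0 ≤ (log i)⁻¹ - (log ↑(i + 1))⁻¹ :=
    sub_nonneg.2 (inv_anti₀ hlog (log_le_log (by positivity) (by push_cast; linarith)))
  calc ((log i)⁻¹ - (log ↑(i + 1))⁻¹) * ∑ p ∈ i.primesLE, log p / p
      ≤ ((log i)⁻¹ - (log ↑(i + 1))⁻¹) * (log i + log 4) :=
        mul_le_mul_of_nonneg_left (sum_primesLE_log_div_le i) hanti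
    _ = (1 - log i / log ↑(i + 1)) + log 4 * ((log i)⁻¹ - (log ↑(i + 1))⁻¹) := by field_simp
    _ ≤ (log (log ↑(i + 1)) - log (log i)) + log 4 * ((log i)⁻¹ - (log ↑(i + 1))⁻¹) := by
        grw [one_sub_div_le_log_sub_log hlog hlog']
    _ = _ := by ring

lemma sum_primesLE_inv_le {y : ℕ} (hy : 2 ≤ y) :
    ∑ p ∈ y.primesLE, (p : ℝ)⁻¹ ≤ log (log y) + 4 := by
  set c : ℕ → ℝ := fun n ↦ if n.Prime then log n / n else 0
  set w : ℕ → ℝ := fun n ↦ (log n)⁻¹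
  set f : ℕ → ℝ := fun i ↦ log (log i) - log 4 * w i
  have hlog : 0 < log y := log_pos (by exact_mod_cast hy)
  have hlhs : ∑ i ∈ Ico 2 (y + 1), w i • c i = ∑ p ∈ y.primesLE, (p : ℝ)⁻¹ := by
    simp only [smul_eq_mul, c, mul_ite, mul_zero, ← sum_filter, filter_prime_Ico_two_eq_primesLE]
    refine sum_congr rfl fun p hp ↦ ?_
    have : 0 < log p := log_pos (by exact_mod_cast Nat.one_lt_of_mem_primesLE hp)
    simp only [w]
    field_simp
  have hparts := sum_Ico_by_parts w c (show 2 < y + 1 by omega)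
  rw [hlhs] at hparts
  simp only [Nat.add_sub_cancel, smul_eq_mul, ← Nat.primesLE_eq_filter_range, c, ← sum_filter]
    at hparts
  have habel : ∑ i ∈ Ico 2 y, (w i - w (i + 1)) * ∑ p ∈ i.primesLE, log p / p ≤ f y - f 2 := by
    rw [← sum_Ico_sub f (by omega)]
    exact sum_le_sum fun i hi ↦ inv_log_sub_inv_log_succ_mul_le (mem_Ico.1 hi).1
  have hlast : w y * ∑ p ∈ y.primesLE, log p / p ≤ 1 + log 4 * w y := by
    calc w y * ∑ p ∈ y.primesLE, log p / p ≤ w y * (log y + log 4) :=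
          mul_le_mul_of_nonneg_left (sum_primesLE_log_div_le y) (inv_nonneg.2 hlog.le)
      _ = 1 + log 4 * w y := by simp only [w]; field_simp
  have hlog2 : log 4 * w 2 = 2 := by
    simp only [w, Nat.cast_ofNat, show (4 : ℝ) = 2 ^ 2 by norm_num, log_pow]
    field_simp
  have hswap : ∑ i ∈ Ico 2 y, (w (i + 1) - w i) * ∑ p ∈ i.primesLE, log p / p
      = -∑ i ∈ Ico 2 y, (w i - w (i + 1)) * ∑ p ∈ i.primesLE, log p / p := by
    rw [← sum_neg_distrib]
    exact sum_congr rfl fun i _ ↦ by ring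
  rw [hparts, hswap, Nat.primesLE_one, sum_empty]
  simp only [f, Nat.cast_ofNat] at habel
  linarith [neg_one_le_log_log_two]

lemma sum_primesLE_inv_sub_one_sub_inv_le_one (y : ℕ) :
    ∑ p ∈ y.primesLE, (((p : ℝ) - 1)⁻¹ - (p : ℝ)⁻¹) ≤ 1 := by
  have hsub : y.primesLE ⊆ Ico 2 (y + 2) := fun p hp ↦
    mem_Ico.2 ⟨Nat.two_le_of_mem_primesLE hp, by have := Nat.le_of_mem_primesLE hp; omega⟩
  calc ∑ p ∈ y.primesLE, (((p : ℝ) - 1)⁻¹ - (p : ℝ)⁻¹)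
      ≤ ∑ n ∈ Ico 2 (y + 2), (((n : ℝ) - 1)⁻¹ - (n : ℝ)⁻¹) := by
        refine sum_le_sum_of_subset_of_nonneg hsub fun n hn _ ↦ ?_
        have : (2 : ℝ) ≤ n := by exact_mod_cast (mem_Ico.1 hn).1
        exact sub_nonneg.2 (inv_anti₀ (by linarith) (by linarith))
    _ = ∑ n ∈ Ico 2 (y + 2), (-(((n + 1 : ℕ) : ℝ) - 1)⁻¹ - -((n : ℝ) - 1)⁻¹) :=
        sum_congr rfl fun n _ ↦ by push_cast; ring
    _ = 1 - ((y : ℝ) + 1)⁻¹ := by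
        rw [sum_Ico_sub (fun n : ℕ ↦ -((n : ℝ) - 1)⁻¹) (by omega : 2 ≤ y + 2)]
        push_cast
        ring
    _ ≤ 1 := by simp only [sub_le_self_iff, inv_nonneg]; positivity

lemma sum_primesLE_inv_sub_one_le {y : ℕ} (hy : 2 ≤ y) :
    ∑ p ∈ y.primesLE, ((p : ℝ) - 1)⁻¹ ≤ log (log y) + 5 := by
  have := sum_primesLE_inv_le hy
  have := sum_primesLE_inv_sub_one_sub_inv_le_one y
  rw [sum_sub_distrib] at this
  linarith

lemma prod_div_sub_one_le_exp_sum {s : Finset ℕ} (hs : ∀ p ∈ s, 1 < p) :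
    ∏ p ∈ s, (p : ℝ) / (p - 1) ≤ exp (∑ p ∈ s, ((p : ℝ) - 1)⁻¹) := by
  have hp : ∀ p ∈ s, (0 : ℝ) < p - 1 := fun p hp ↦ by
    have : (1 : ℝ) < p := by exact_mod_cast hs p hp
    linarith
  calc ∏ p ∈ s, (p : ℝ) / (p - 1) = ∏ p ∈ s, (1 + ((p : ℝ) - 1)⁻¹) :=
        prod_congr rfl fun p h ↦ by field_simp [(hp p h).ne']; ring
    _ ≤ _ := prod_one_add_le_exp_sum s fun p h ↦ by linarith [inv_pos.2 (hp p h)]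

lemma one_le_div_sub_one {p : ℝ} (hp : 1 < p) : 1 ≤ p / (p - 1) :=
  (one_le_div (by linarith)).2 (by linarith)

lemma prod_primesLE_div_sub_one_le (N : ℕ) :
    ∏ p ∈ N.primesLE, (p : ℝ) / (p - 1) ≤ exp 5 * log (N + 2) := by
  have hge : ∀ p ∈ (N + 2).primesLE, (1 : ℝ) ≤ p / (p - 1) := fun p hp ↦
    one_le_div_sub_one (by exact_mod_cast Nat.one_lt_of_mem_primesLE hp)
  have hlog : 0 < log ((N : ℝ) + 2) := log_pos (by linarith [N.cast_nonneg (α := ℝ)])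
  calc ∏ p ∈ N.primesLE, (p : ℝ) / (p - 1) ≤ ∏ p ∈ (N + 2).primesLE, (p : ℝ) / (p - 1) :=
        prod_le_prod_of_subset_of_one_le (Nat.primesLE_mono (by omega))
          (fun p hp ↦ zero_le_one.trans (hge p (Nat.primesLE_mono (by omega) hp)))
          fun p hp _ ↦ hge p hp
    _ ≤ exp (log (log ↑(N + 2)) + 5) :=
        (prod_div_sub_one_le_exp_sum fun p hp ↦ Nat.one_lt_of_mem_primesLE hp).trans
          (exp_le_exp.2 (sum_primesLE_inv_sub_one_le (by omega)))
    _ = exp 5 * log (N + 2) := by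
        push_cast
        rw [exp_add, exp_log hlog, mul_comm]

lemma cast_div_totient_eq_prod {K : Type*} [Field K] [CharZero K] {n : ℕ} (hn : n ≠ 0) :
    (n : K) / φ n = ∏ p ∈ n.primeFactors, (p : K) / (p - 1) := by
  have hsub : ∀ p ∈ n.primeFactors, ((p - 1 : ℕ) : K) = p - 1 := fun p hp ↦
    Nat.cast_pred (Nat.pos_of_mem_primeFactors hp)
  have hne : ∀ p ∈ n.primeFactors, (p : K) - 1 ≠ 0 := fun p hp ↦ by
    rw [← hsub p hp, Nat.cast_ne_zero]
    exact (Nat.sub_pos_of_lt (Nat.prime_of_mem_primeFactors hp).one_lt).ne'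
  have hφ : (φ n : K) ≠ 0 := by exact_mod_cast (Nat.totient_pos.2 (Nat.pos_of_ne_zero hn)).ne'
  have key := congrArg (Nat.cast (R := K)) (Nat.totient_mul_prod_primeFactors n)
  push_cast [Nat.cast_prod, prod_congr rfl hsub] at key
  rw [prod_div_distrib, div_eq_div_iff hφ (prod_ne_zero_iff.2 hne), ← key, mul_comm]

lemma two_pow_card_primeFactors_le {n : ℕ} (hn : n ≠ 0) : 2 ^ #n.primeFactors ≤ n :=
  calc 2 ^ #n.primeFactors = ∏ _p ∈ n.primeFactors, 2 := (prod_const 2).symm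
    _ ≤ ∏ p ∈ n.primeFactors, p :=
        prod_le_prod' fun _ hp ↦ (Nat.prime_of_mem_primeFactors hp).two_le
    _ ≤ n := Nat.le_of_dvd (Nat.pos_of_ne_zero hn) (Nat.prod_primeFactors_dvd n)

lemma cast_div_totient_le_exp_mul_log {n : ℕ} (hn : n ≠ 0) :
    (n : ℝ) / φ n ≤ exp 6 * log (#n.primeFactors + 2) := by
  set k := #n.primeFactors
  have hone : ∀ p ∈ n.primeFactors, 1 < p := fun p hp ↦ (Nat.prime_of_mem_primeFactors hp).one_lt
  have hsmall : ∑ p ∈ n.primeFactors with p ≤ k + 2, ((p : ℝ) - 1)⁻¹ ≤ log (log ↑(k + 2)) + 5 := by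
    refine (sum_le_sum_of_subset_of_nonneg (fun p hp ↦ ?_) fun p hp _ ↦ ?_).trans
      (sum_primesLE_inv_sub_one_le (by omega))
    · rw [mem_filter] at hp
      exact Nat.mem_primesLE.2 ⟨hp.2, Nat.prime_of_mem_primeFactors hp.1⟩
    · have : (2 : ℝ) ≤ p := by exact_mod_cast Nat.two_le_of_mem_primesLE hp
      exact inv_nonneg.2 (by linarith)
  -- there are at most `k` primes above `k + 2`, each contributing less than `1 / (k + 1)`
  have hlarge : ∑ p ∈ n.primeFactors with ¬p ≤ k + 2, ((p : ℝ) - 1)⁻¹ ≤ 1 := by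
    have hk : (0 : ℝ) < k + 1 := by positivity
    calc ∑ p ∈ n.primeFactors with ¬p ≤ k + 2, ((p : ℝ) - 1)⁻¹
        ≤ #{p ∈ n.primeFactors | ¬p ≤ k + 2} • ((k : ℝ) + 1)⁻¹ := by
          refine sum_le_card_nsmul _ _ _ fun p hp ↦ inv_anti₀ hk ?_
          have : (k : ℝ) + 2 < p := by exact_mod_cast not_le.1 (mem_filter.1 hp).2
          linarith
      _ ≤ k • ((k : ℝ) + 1)⁻¹ := by gcongr; exact card_filter_le _ _
      _ ≤ 1 := by
          rw [nsmul_eq_mul, ← div_eq_mul_inv, div_le_one hk]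
          linarith
  have hlog : 0 < log ((k : ℝ) + 2) := log_pos (by linarith [k.cast_nonneg (α := ℝ)])
  calc (n : ℝ) / φ n = ∏ p ∈ n.primeFactors, (p : ℝ) / (p - 1) := cast_div_totient_eq_prod hn
    _ ≤ exp (∑ p ∈ n.primeFactors, ((p : ℝ) - 1)⁻¹) := prod_div_sub_one_le_exp_sum hone
    _ ≤ exp (log (log ↑(k + 2)) + 6) := by
        rw [← sum_filter_add_sum_filter_not _ (· ≤ k + 2)]
        exact exp_le_exp.2 (by linarith)
    _ = exp 6 * log (k + 2) := by
        push_cast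
        rw [exp_add, exp_log hlog, mul_comm]

lemma one_div_twelve_le_log_log {x : ℝ} (hx : 3 ≤ x) : 1 / 12 ≤ log (log x) := by
  have hlog : 1.0986 ≤ log x := by
    linarith [log_three_gt_d9, log_le_log (by norm_num) hx]
  have := one_sub_inv_le_log_of_pos (lt_of_lt_of_le (by norm_num) hlog)
  have : (log x)⁻¹ ≤ 1.0986⁻¹ := inv_anti₀ (by norm_num) hlog
  norm_num at *
  linarith

lemma log_card_primeFactors_add_two_le {n : ℕ} (hn : n ≠ 0) {x : ℝ} (hnx : n ≤ x) (hx : 3 ≤ x) :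
    log (#n.primeFactors + 2) ≤ 18 * log (log x) := by
  set k := #n.primeFactors
  have hL : 1 ≤ log x := by linarith [log_three_gt_d9, log_le_log (by norm_num) hx]
  have hk : k * log 2 ≤ log x := by
    rw [← log_pow]
    exact log_le_log (by positivity)
      ((Nat.cast_le.2 (two_pow_card_primeFactors_le hn)).trans' (by push_cast; rfl) |>.trans hnx)
  have hk4 : (k : ℝ) + 2 ≤ 4 * log x := by nlinarith [log_two_gt_d9, k.cast_nonneg (α := ℝ)]
  have hlog4 : log 4 ≤ 17 / 12 := by
    rw [show (4 : ℝ) = 2 ^ 2 by norm_num, log_pow]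
    linarith [log_two_lt_d9]
  calc log ((k : ℝ) + 2) ≤ log (4 * log x) := log_le_log (by positivity) hk4
    _ = log 4 + log (log x) := log_mul (by norm_num) (by linarith)
    _ ≤ 18 * log (log x) := by linarith [one_div_twelve_le_log_log hx]

lemma cast_card_le_div_add_one_of_modEq {S : Finset ℕ} {k : ℕ} {X : ℝ} (hk : 0 < k) (hX : 0 ≤ X)
    (hSX : ∀ n ∈ S, (n : ℝ) ≤ X) (hS : ∀ n ∈ S, ∀ n' ∈ S, n ≡ n' [MOD k]) :
    (#S : ℝ) ≤ X / k + 1 := by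
  -- distinct elements of `S` lie in distinct blocks `[j k, (j + 1) k)`
  have hcard : #S ≤ #(range (⌊X / k⌋₊ + 1)) := by
    refine card_le_card_of_injOn (· / k) (fun n hn ↦ ?_) fun n hn n' hn' h ↦ ?_
    · refine mem_range.2 (Nat.lt_succ_of_le (Nat.le_floor ?_))
      exact Nat.cast_div_le.trans (by gcongr; exact hSX n hn)
    · rw [← Nat.div_add_mod n k, ← Nat.div_add_mod n' k]
      simp only at h
      rw [h, hS n hn n' hn']
  rw [card_range] at hcard
  calc (#S : ℝ) ≤ ⌊X / k⌋₊ + 1 := by exact_mod_cast hcard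
    _ ≤ X / k + 1 := by gcongr; exact Nat.floor_le (by positivity)

lemma cast_card_le_div_add_one_of_modEq_of_dvd {S : Finset ℕ} {a q d : ℕ} {X : ℝ} (hq : 0 < q)
    (hd : 0 < d) (ha : a.Coprime q) (hX : 0 ≤ X)
    (hS : ∀ n ∈ S, (n : ℝ) ≤ X ∧ n ≡ a [MOD q] ∧ d ∣ n) : (#S : ℝ) ≤ X / (d * q) + 1 := by
  rcases S.eq_empty_or_nonempty with rfl | ⟨n₀, hn₀⟩
  · simp only [card_empty, Nat.cast_zero]
    positivity
  have hdq : d.Coprime q :=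
    Nat.Coprime.coprime_dvd_left (hS n₀ hn₀).2.2 (((hS n₀ hn₀).2.1.gcd_eq).trans ha)
  have hmod : ∀ n ∈ S, ∀ n' ∈ S, n ≡ n' [MOD d * q] := fun n hn n' hn' ↦
    (Nat.modEq_and_modEq_iff_modEq_mul hdq).1
      ⟨(Nat.modEq_zero_iff_dvd.2 (hS n hn).2.2).trans
          (Nat.modEq_zero_iff_dvd.2 (hS n' hn').2.2).symm,
        (hS n hn).2.1.trans (hS n' hn').2.1.symm⟩
  exact_mod_cast cast_card_le_div_add_one_of_modEq (by positivity) hX (fun n hn ↦ (hS n hn).1) hmod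

lemma sum_sq_div_totient_le_loglog {a q : ℕ} (hq : 0 < q) {X : ℝ} (hX : 1 ≤ X) :
    ∑ n ∈ Icc 1 ⌊X⌋₊ with n ≡ a [MOD q], ((n : ℝ) / φ n) ^ 2
      ≤ 324 * exp 12 * ((X / q + 1) * log (log (3 * X)) ^ 2) := by
  set S := {n ∈ Icc 1 ⌊X⌋₊ | n ≡ a [MOD q]}
  have hSX : ∀ n ∈ S, n ≠ 0 ∧ (n : ℝ) ≤ X := fun n hn ↦ by
    obtain ⟨hn1, hnX⟩ := mem_Icc.1 (mem_filter.1 hn).1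
    exact ⟨by omega, (Nat.cast_le.2 hnX).trans (Nat.floor_le (by linarith))⟩
  have hterm : ∀ n ∈ S, ((n : ℝ) / φ n) ^ 2 ≤ (18 * exp 6 * log (log (3 * X))) ^ 2 := fun n hn ↦ by
    obtain ⟨hn0, hnX⟩ := hSX n hn
    gcongr
    calc (n : ℝ) / φ n ≤ exp 6 * log (#n.primeFactors + 2) := cast_div_totient_le_exp_mul_log hn0
      _ ≤ exp 6 * (18 * log (log (3 * X))) := by
          gcongr
          exact log_card_primeFactors_add_two_le hn0 (by linarith) (by linarith)
      _ = 18 * exp 6 * log (log (3 * X)) := by ring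
  have hcard : (#S : ℝ) ≤ X / q + 1 :=
    cast_card_le_div_add_one_of_modEq hq (by linarith) (fun n hn ↦ (hSX n hn).2)
      fun n hn n' hn' ↦ (mem_filter.1 hn).2.trans (mem_filter.1 hn').2.symm
  calc ∑ n ∈ S, ((n : ℝ) / φ n) ^ 2 ≤ #S • (18 * exp 6 * log (log (3 * X))) ^ 2 :=
        sum_le_card_nsmul _ _ _ hterm
    _ ≤ (X / q + 1) * (18 * exp 6 * log (log (3 * X))) ^ 2 := by
        rw [nsmul_eq_mul]
        gcongr
    _ = 324 * exp 12 * ((X / q + 1) * log (log (3 * X)) ^ 2) := by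
        rw [show (12 : ℝ) = 6 + 6 by norm_num, exp_add]
        ring

lemma prod_one_add_eq_sum_powerset_of_subset {ι R : Type*} [CommSemiring R] [DecidableEq ι]
    {s t : Finset ι} (h : t ⊆ s) (f : ι → R) :
    ∏ i ∈ t, (1 + f i) = ∑ u ∈ s.powerset, if u ⊆ t then ∏ i ∈ u, f i else 0 := by
  rw [prod_one_add, ← sum_filter]
  congr 1
  ext u
  simp only [mem_powerset, mem_filter]
  exact ⟨fun hu ↦ ⟨hu.trans h, hu⟩, And.right⟩

lemma sum_prod_primeFactors_one_add_le {g : ℕ → ℝ} (hg : ∀ p, p.Prime → 0 ≤ g p) {a q : ℕ}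
    (hq : 0 < q) (ha : a.Coprime q) {X : ℝ} (hX : 0 ≤ X) :
    ∑ n ∈ Icc 1 ⌊X⌋₊ with n ≡ a [MOD q], ∏ p ∈ n.primeFactors, (1 + g p)
      ≤ X / q * ∏ p ∈ (⌊X⌋₊).primesLE, (1 + g p / p) + ∏ p ∈ (⌊X⌋₊).primesLE, (1 + g p) := by
  set S := {n ∈ Icc 1 ⌊X⌋₊ | n ≡ a [MOD q]}
  set P := (⌊X⌋₊).primesLE
  have hG : ∀ s ∈ P.powerset, 0 ≤ ∏ p ∈ s, g p := fun s hs ↦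
    prod_nonneg fun p hp ↦ hg p (Nat.prime_of_mem_primesLE (mem_powerset.1 hs hp))
  have hcount : ∀ s ∈ P.powerset,
      (#{n ∈ S | s ⊆ n.primeFactors} : ℝ) ≤ X / ((∏ p ∈ s, p : ℕ) * q) + 1 := by
    intro s hs
    have hprime : ∀ p ∈ s, p.Prime := fun p hp ↦ Nat.prime_of_mem_primesLE (mem_powerset.1 hs hp)
    refine cast_card_le_div_add_one_of_modEq_of_dvd hq (prod_pos fun p hp ↦ (hprime p hp).pos) ha hX
      fun n hn ↦ ?_
    obtain ⟨hnS, hsn⟩ := mem_filter.1 hn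
    obtain ⟨hnI, hna⟩ := mem_filter.1 hnS
    refine ⟨(Nat.cast_le.2 (mem_Icc.1 hnI).2).trans (Nat.floor_le hX), hna, ?_⟩
    exact prod_primes_dvd n (fun p hp ↦ (hprime p hp).prime)
      fun p hp ↦ Nat.dvd_of_mem_primeFactors (hsn hp)
  calc ∑ n ∈ S, ∏ p ∈ n.primeFactors, (1 + g p)
      = ∑ n ∈ S, ∑ s ∈ P.powerset, if s ⊆ n.primeFactors then ∏ p ∈ s, g p else 0 := by
        refine sum_congr rfl fun n hn ↦ prod_one_add_eq_sum_powerset_of_subset (fun p hp ↦ ?_) g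
        exact Nat.mem_primesLE.2
          ⟨(Nat.le_of_mem_primeFactors hp).trans (mem_Icc.1 (mem_filter.1 hn).1).2,
            Nat.prime_of_mem_primeFactors hp⟩
    _ = ∑ s ∈ P.powerset, (#{n ∈ S | s ⊆ n.primeFactors} : ℝ) * ∏ p ∈ s, g p := by
        rw [sum_comm]
        simp only [← sum_filter, sum_const, nsmul_eq_mul]
    _ ≤ ∑ s ∈ P.powerset, (X / ((∏ p ∈ s, p : ℕ) * q) + 1) * ∏ p ∈ s, g p :=
        sum_le_sum fun s hs ↦ mul_le_mul_of_nonneg_right (hcount s hs) (hG s hs)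
    _ = X / q * ∑ s ∈ P.powerset, ∏ p ∈ s, g p / p + ∑ s ∈ P.powerset, ∏ p ∈ s, g p := by
        rw [mul_sum, ← sum_add_distrib]
        refine sum_congr rfl fun s _ ↦ ?_
        rw [prod_div_distrib]
        push_cast
        ring
    _ = X / q * ∏ p ∈ P, (1 + g p / p) + ∏ p ∈ P, (1 + g p) := by
        rw [prod_one_add, prod_one_add]

lemma div_sub_one_sq_sub_one_div_le {p : ℝ} (hp : 2 ≤ p) :
    ((p / (p - 1)) ^ 2 - 1) / p ≤ 3 * ((p - 1)⁻¹ - p⁻¹) := by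
  have h1 : 0 < p - 1 := by linarith
  rw [div_pow, div_le_iff₀ (by linarith)]
  field_simp
  nlinarith

lemma prod_primesLE_one_add_div_sub_one_sq_sub_one_div_le (N : ℕ) :
    ∏ p ∈ N.primesLE, (1 + (((p : ℝ) / (p - 1)) ^ 2 - 1) / p) ≤ exp 3 := by
  have hp2 : ∀ p ∈ N.primesLE, (2 : ℝ) ≤ p := fun p hp ↦ by
    exact_mod_cast Nat.two_le_of_mem_primesLE hp
  refine (prod_one_add_le_exp_sum _ fun p hp ↦ ?_).trans (exp_le_exp.2 ?_)
  · have := one_le_div_sub_one (by linarith [hp2 p hp] : 1 < (p : ℝ))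
    have : 0 ≤ ((p : ℝ) / (p - 1)) ^ 2 - 1 := by nlinarith
    linarith [div_nonneg this (by linarith [hp2 p hp] : 0 ≤ (p : ℝ))]
  · calc ∑ p ∈ N.primesLE, (((p : ℝ) / (p - 1)) ^ 2 - 1) / p
          ≤ ∑ p ∈ N.primesLE, 3 * (((p : ℝ) - 1)⁻¹ - (p : ℝ)⁻¹) :=
          sum_le_sum fun p hp ↦ div_sub_one_sq_sub_one_div_le (hp2 p hp)
      _ ≤ 3 := by
          rw [← mul_sum]
          linarith [sum_primesLE_inv_sub_one_sub_inv_le_one N]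

lemma sum_sq_div_totient_le_log_sq {a q : ℕ} (hq : 0 < q) (ha : a.Coprime q) {X : ℝ}
    (hX : 1 ≤ X) :
    ∑ n ∈ Icc 1 ⌊X⌋₊ with n ≡ a [MOD q], ((n : ℝ) / φ n) ^ 2
      ≤ exp 10 * (X / q + log (3 * X) ^ 2) := by
  set N := ⌊X⌋₊
  set g : ℕ → ℝ := fun p ↦ ((p : ℝ) / (p - 1)) ^ 2 - 1
  have hratio : ∀ p : ℕ, p.Prime → 1 ≤ (p : ℝ) / (p - 1) := fun p hp ↦
    one_le_div_sub_one (by exact_mod_cast hp.one_lt)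
  have hg : ∀ p : ℕ, p.Prime → 0 ≤ g p := fun p hp ↦ by
    have := hratio p hp
    simp only [g, sub_nonneg]
    nlinarith
  have hsq : ∀ n ∈ {n ∈ Icc 1 N | n ≡ a [MOD q]},
      ((n : ℝ) / φ n) ^ 2 = ∏ p ∈ n.primeFactors, (1 + g p) :=
    fun n hn ↦ by
      have hn0 : n ≠ 0 := by have := (mem_Icc.1 (mem_filter.1 hn).1).1; omega
      rw [cast_div_totient_eq_prod hn0, ← prod_pow]
      simp only [g, add_sub_cancel]
  have hlarge : ∏ p ∈ N.primesLE, (1 + g p) ≤ (exp 5 * log (3 * X)) ^ 2 := by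
    simp only [g, add_sub_cancel, prod_pow]
    have hN : (N : ℝ) + 2 ≤ 3 * X := by linarith [Nat.floor_le (by linarith : (0 : ℝ) ≤ X)]
    have hnonneg : ∀ p ∈ N.primesLE, 0 ≤ (p : ℝ) / (p - 1) := fun p hp ↦
      zero_le_one.trans (hratio p (Nat.prime_of_mem_primesLE hp))
    refine pow_le_pow_left₀ (prod_nonneg hnonneg) ((prod_primesLE_div_sub_one_le N).trans ?_) 2
    gcongr
  rw [sum_congr rfl hsq]
  calc _ ≤ X / q * ∏ p ∈ N.primesLE, (1 + g p / p) + ∏ p ∈ N.primesLE, (1 + g p) :=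
        sum_prod_primeFactors_one_add_le hg hq ha (by linarith)
    _ ≤ X / q * exp 3 + (exp 5 * log (3 * X)) ^ 2 := by
        gcongr
        exact prod_primesLE_one_add_div_sub_one_sq_sub_one_div_le N
    _ ≤ exp 10 * (X / q + log (3 * X) ^ 2) := by
        have : exp 3 ≤ exp 10 := exp_le_exp.2 (by norm_num)
        rw [mul_pow, ← exp_nat_mul]
        norm_num
        nlinarith [div_nonneg (by linarith : (0 : ℝ) ≤ X) (Nat.cast_nonneg q : (0 : ℝ) ≤ q)]

lemma moebius_sq_mul_sq_div_totient_sq_le (n : ℕ) :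
    (μ n : ℝ) ^ 2 * (n : ℝ) ^ 2 / (φ n : ℝ) ^ 2 ≤ ((n : ℝ) / φ n) ^ 2 := by
  have : (μ n : ℝ) ^ 2 ≤ 1 := by
    rw [sq_le_one_iff_abs_le_one]
    exact_mod_cast ArithmeticFunction.abs_moebius_le_one
  rw [div_pow]
  gcongr
  exact mul_le_of_le_one_left (by positivity) this

theorem sum_sq_over_phi_sq_in_progression_le :
    ∃ C > 0, ∀ a q m : ℕ, 0 < a → 0 < q → 0 < m →
      Nat.gcd a (q * m) = 1 → Nat.gcd q m = 1 → ∀ X : ℝ, 1 ≤ X →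
      (∑ n ∈ (Finset.Icc 1 ⌊X⌋₊).filter
          (fun n => n % q = a % q ∧ Nat.Coprime n m),
        ((μ n : ℝ) ^ 2 * (n : ℝ) ^ 2 / (Nat.totient n : ℝ) ^ 2))
      ≤ C * min (X / q + (Real.log (3 * X)) ^ 2)
          ((X / q + 1) * (Real.log (Real.log (3 * X))) ^ 2) := by
  refine ⟨324 * exp 12, by positivity, fun a q m _ hq _ haqm _ X hX ↦ ?_⟩
  have haq : a.Coprime q := Nat.Coprime.coprime_mul_right_right haqm
  have hexp : exp 10 ≤ 324 * exp 12 := by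
    linarith [exp_le_exp.2 (by norm_num : (10 : ℝ) ≤ 12), exp_pos 12]
  rw [mul_min_of_nonneg _ _ (by positivity)]
  calc _ ≤ ∑ n ∈ Icc 1 ⌊X⌋₊ with n ≡ a [MOD q], ((n : ℝ) / φ n) ^ 2 :=
        (sum_le_sum fun n _ ↦ moebius_sq_mul_sq_div_totient_sq_le n).trans
          (sum_le_sum_of_subset_of_nonneg (monotone_filter_right _ fun _ _ h ↦ h.1)
            fun n _ _ ↦ by positivity)
    _ ≤ _ := le_min ((sum_sq_div_totient_le_log_sq hq haq hX).trans (by gcongr))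
          (sum_sq_div_totient_le_loglog hq hX)
end

section
/- Let ξ be an arithmetic function and M_ξ ≥ 0 with Σ_{n≥1} |ξ(n)|/n^{1/2} ≤ M_ξ. Then for every real T ≥ 1, Σ_{T ≤ n < 2T} (1*ξ)(n)/n = (log 2) · Σ_{n≥1} ξ(n)/n + O(M_ξ / T^{1/2}), where 1*ξ denotes Dirichlet convolution with the constant function 1, i.e. (1*ξ)(n) = Σ_{d|n} ξ(d). -/
/-!
Writing `n = d m`, the dyadic sum becomes `∑_d ξ(d)/d · H(T/d)`, where `H(x)` is the sum of
`1/m` over the integers `m ∈ [x, 2x)`. Comparing with `∫ dt/t` gives `|H(x) - log 2| ≤ 2/x`,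
while trivially `0 ≤ H(x) ≤ 1`; together `|H(x) - log 2| ≤ √(2/x)`. Hence the error is at most
`∑_d |ξ(d)|/d · √(2d/T) = √(2/T) ∑_d |ξ(d)|/√d`.
-/

open Finset Real

noncomputable def harmonicIco (x y : ℝ) : ℝ := ∑ m ∈ Ico ⌈x⌉₊ ⌈y⌉₊, (m : ℝ)⁻¹

lemma log_sub_log_le_sum_Ico_inv {a b : ℕ} (ha : 0 < a) (hab : a ≤ b) :
    log b - log a ≤ ∑ m ∈ Ico a b, (m : ℝ)⁻¹ := by
  have ha' : (0 : ℝ) < a := by exact_mod_cast ha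
  have hb' : (0 : ℝ) < b := by exact_mod_cast ha.trans_le hab
  calc log b - log a = ∫ t in (a : ℝ)..b, t⁻¹ := by
        rw [integral_inv_of_pos ha' hb', log_div hb'.ne' ha'.ne']
    _ ≤ _ := (inv_antitoneOn_Icc_right ha').integral_le_sum_Ico hab

lemma sum_Ico_inv_le_log_sub_log_add_inv {a b : ℕ} (ha : 0 < a) (hab : a ≤ b) :
    ∑ m ∈ Ico a b, (m : ℝ)⁻¹ ≤ log b - log a + (a : ℝ)⁻¹ := by
  have ha' : (0 : ℝ) < a := by exact_mod_cast ha
  have hb' : (0 : ℝ) < b := by exact_mod_cast ha.trans_le hab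
  have hshift : ∑ m ∈ Ico a b, ((m + 1 : ℕ) : ℝ)⁻¹ ≤ log b - log a := by
    calc _ ≤ ∫ t in (a : ℝ)..b, t⁻¹ := (inv_antitoneOn_Icc_right ha').sum_le_integral_Ico hab
      _ = log b - log a := by rw [integral_inv_of_pos ha' hb', log_div hb'.ne' ha'.ne']
  have htelescope := sum_Ico_sub (fun m : ℕ => -(m : ℝ)⁻¹) hab
  simp only [sum_sub_distrib, sum_neg_distrib] at htelescope
  have : 0 ≤ (b : ℝ)⁻¹ := by positivity
  linarith

lemma harmonicIco_nonneg (x y : ℝ) : 0 ≤ harmonicIco x y :=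
  sum_nonneg fun m _ => by positivity

lemma harmonicIco_two_mul_le_one {x : ℝ} (hx : 0 < x) : harmonicIco x (2 * x) ≤ 1 := by
  have ha : (0 : ℝ) < ⌈x⌉₊ := by exact_mod_cast Nat.ceil_pos.2 hx
  have hb : ⌈2 * x⌉₊ ≤ 2 * ⌈x⌉₊ := Nat.ceil_le.2 (by push_cast; linarith [Nat.le_ceil x])
  calc harmonicIco x (2 * x) ≤ ∑ _m ∈ Ico ⌈x⌉₊ ⌈2 * x⌉₊, ((⌈x⌉₊ : ℕ) : ℝ)⁻¹ :=
        sum_le_sum fun m hm => inv_anti₀ ha (by exact_mod_cast (mem_Ico.1 hm).1)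
    _ = ((⌈2 * x⌉₊ - ⌈x⌉₊ : ℕ) : ℝ) * (⌈x⌉₊ : ℝ)⁻¹ := by
        rw [sum_const, Nat.card_Ico, nsmul_eq_mul]
    _ ≤ (⌈x⌉₊ : ℝ) * (⌈x⌉₊ : ℝ)⁻¹ := by gcongr; omega
    _ = 1 := mul_inv_cancel₀ ha.ne'

lemma log_sub_log_le_sub_div {u v : ℝ} (hu : 0 < u) (hv : 0 < v) :
    log u - log v ≤ (u - v) / v := by
  rw [← log_div hu.ne' hv.ne', sub_div, div_self hv.ne']
  exact log_le_sub_one_of_pos (div_pos hu hv)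

lemma abs_harmonicIco_two_mul_sub_log_two_le {x : ℝ} (hx : 0 < x) :
    |harmonicIco x (2 * x) - log 2| ≤ 2 / x := by
  have ha0 : 0 < ⌈x⌉₊ := Nat.ceil_pos.2 hx
  have hab : ⌈x⌉₊ ≤ ⌈2 * x⌉₊ := Nat.ceil_mono (by linarith)
  have hlower := log_sub_log_le_sum_Ico_inv ha0 hab
  have hupper := sum_Ico_inv_le_log_sub_log_add_inv ha0 hab
  rw [← harmonicIco] at hlower hupper
  set a : ℝ := (⌈x⌉₊ : ℝ)
  set b : ℝ := (⌈2 * x⌉₊ : ℝ)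
  have ha : x ≤ a := Nat.le_ceil x
  have ha' : a < x + 1 := Nat.ceil_lt_add_one hx.le
  have hb : 2 * x ≤ b := Nat.le_ceil _
  have hb' : b < 2 * x + 1 := Nat.ceil_lt_add_one (by positivity)
  have hinv : a⁻¹ ≤ 1 / x := by rw [one_div]; exact inv_anti₀ hx ha
  have hlog_two_mul : log (2 * a) = log 2 + log a := log_mul two_ne_zero (by positivity)
  have hlog_upper : log b - log (2 * a) ≤ 1 / x :=
    calc log b - log (2 * a) ≤ (b - 2 * a) / (2 * a) :=
          log_sub_log_le_sub_div (by positivity) (by positivity)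
      _ ≤ 1 / (2 * a) := by gcongr; linarith
      _ ≤ 1 / x := by gcongr; linarith
  have hlog_lower : log (2 * a) - log b ≤ 1 / x :=
    calc log (2 * a) - log b ≤ (2 * a - b) / b :=
          log_sub_log_le_sub_div (by positivity) (by positivity)
      _ ≤ 2 / b := by gcongr; linarith
      _ ≤ 2 / (2 * x) := by gcongr
      _ = 1 / x := by field_simp
  rw [abs_le]
  constructor <;> linarith [show 2 / x = 1 / x + 1 / x by ring]

lemma abs_harmonicIco_two_mul_sub_log_two_le_sqrt {x : ℝ} (hx : 0 < x) :
    |harmonicIco x (2 * x) - log 2| ≤ √(2 / x) := by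
  have hle_one : |harmonicIco x (2 * x) - log 2| ≤ 1 := by
    have := harmonicIco_nonneg x (2 * x)
    have := harmonicIco_two_mul_le_one hx
    rw [abs_le]; constructor <;> linarith [log_two_gt_d9, log_two_lt_d9]
  apply Real.abs_le_sqrt
  rw [← sq_abs, sq]
  calc _ ≤ 1 * (2 / x) := mul_le_mul hle_one (abs_harmonicIco_two_mul_sub_log_two_le hx)
        (abs_nonneg _) zero_le_one
    _ = 2 / x := one_mul _

lemma mem_Ico_ceil_div_iff {x y : ℝ} {d : ℕ} (hd : 0 < d) (m : ℕ) :
    m ∈ Ico ⌈x / d⌉₊ ⌈y / d⌉₊ ↔ d * m ∈ Ico ⌈x⌉₊ ⌈y⌉₊ := by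
  have hd' : (0 : ℝ) < d := by exact_mod_cast hd
  simp only [mem_Ico, Nat.ceil_le, Nat.lt_ceil, div_le_iff₀ hd', lt_div_iff₀ hd', Nat.cast_mul,
    mul_comm (m : ℝ)]

lemma filter_dvd_Ico_ceil_eq_map {x y : ℝ} {d : ℕ} (hd : 0 < d) :
    (Ico ⌈x⌉₊ ⌈y⌉₊).filter (d ∣ ·) =
      (Ico ⌈x / d⌉₊ ⌈y / d⌉₊).map ⟨(d * ·), mul_right_injective₀ hd.ne'⟩ := by
  ext n
  simp only [mem_filter, mem_map, Function.Embedding.coeFn_mk]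
  constructor
  · rintro ⟨hn, m, rfl⟩
    exact ⟨m, (mem_Ico_ceil_div_iff hd m).2 hn, rfl⟩
  · rintro ⟨m, hm, rfl⟩
    exact ⟨(mem_Ico_ceil_div_iff hd m).1 hm, dvd_mul_right d m⟩

lemma sum_Ico_ceil_sum_divisors_div {x : ℝ} (hx : 0 < x) (y : ℝ) (ξ : ℕ → ℂ) :
    ∑ n ∈ Ico ⌈x⌉₊ ⌈y⌉₊, (∑ d ∈ n.divisors, ξ d) / (n : ℂ) =
      ∑ d ∈ Ico 1 ⌈y⌉₊, ξ d / d * (harmonicIco (x / d) (y / d) : ℂ) := by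
  simp_rw [sum_div]
  rw [sum_comm' (t' := Ico 1 ⌈y⌉₊) (s' := fun d => (Ico ⌈x⌉₊ ⌈y⌉₊).filter (d ∣ ·))]
  · refine sum_congr rfl fun d hd => ?_
    have hd : 0 < d := (mem_Ico.1 hd).1
    rw [filter_dvd_Ico_ceil_eq_map hd, sum_map, harmonicIco]
    push_cast
    rw [mul_sum]
    refine sum_congr rfl fun m _ => ?_
    simp only [Function.Embedding.coeFn_mk, Nat.cast_mul]
    ring
  · intro n d
    have hceil : 0 < ⌈x⌉₊ := Nat.ceil_pos.2 hx
    simp only [mem_Ico, Nat.mem_divisors, mem_filter]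
    constructor
    · rintro ⟨hn, hdn, -⟩
      exact ⟨⟨hn, hdn⟩, Nat.pos_of_dvd_of_pos hdn (by omega),
        (Nat.le_of_dvd (by omega) hdn).trans_lt hn.2⟩
    · rintro ⟨⟨hn, hdn⟩, -⟩
      exact ⟨hn, hdn, by omega⟩

lemma hasSum_div_mul_harmonicIco {x : ℝ} (hx : 0 < x) (y : ℝ) (ξ : ℕ → ℂ) :
    HasSum (fun d : ℕ => ξ d / d * (harmonicIco (x / d) (y / d) : ℂ))
      (∑ n ∈ Ico ⌈x⌉₊ ⌈y⌉₊, (∑ d ∈ n.divisors, ξ d) / (n : ℂ)) := by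
  rw [sum_Ico_ceil_sum_divisors_div hx]
  refine hasSum_sum_of_ne_finset_zero fun d hd => ?_
  rcases Nat.eq_zero_or_pos d with rfl | hd0
  · simp
  have hd' : (0 : ℝ) < d := by exact_mod_cast hd0
  have hyd : y ≤ d := by
    simp only [mem_Ico, not_and, not_lt] at hd
    exact Nat.ceil_le.1 (hd hd0)
  have hempty : ⌈y / d⌉₊ ≤ ⌈x / d⌉₊ := by
    have : (1 : ℝ) ≤ ⌈x / d⌉₊ := by exact_mod_cast Nat.ceil_pos.2 (div_pos hx hd')
    exact Nat.ceil_le.2 (((div_le_one hd').2 hyd).trans this)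
  rw [harmonicIco, Ico_eq_empty_of_le hempty, sum_empty, Complex.ofReal_zero, mul_zero]

lemma norm_div_natCast_le_div_sqrt (z : ℂ) (n : ℕ) : ‖z / n‖ ≤ ‖z‖ / √n := by
  rcases Nat.eq_zero_or_pos n with rfl | hn
  · simp
  have hn' : (1 : ℝ) ≤ n := by exact_mod_cast hn
  rw [norm_div, Complex.norm_natCast]
  exact div_le_div_of_nonneg_left (norm_nonneg z) (by positivity)
    (Real.sqrt_le_self_iff.2 (Or.inr hn'))

lemma norm_div_mul_harmonicIco_sub_log_two_mul_le (z : ℂ) {T : ℝ} (hT : 0 < T) (d : ℕ) :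
    ‖z / d * (harmonicIco (T / d) (2 * T / d) : ℂ) - (log 2 : ℂ) * (z / d)‖ ≤
      √2 / √T * (‖z‖ / √d) := by
  rcases Nat.eq_zero_or_pos d with rfl | hd
  · simp
  have hd' : (0 : ℝ) < d := by exact_mod_cast hd
  have hx : 0 < T / d := by positivity
  have hfactor : z / d * (harmonicIco (T / d) (2 * T / d) : ℂ) - (log 2 : ℂ) * (z / d) =
      z / d * ((harmonicIco (T / d) (2 * (T / d)) - log 2 : ℝ) : ℂ) := by
    rw [mul_div_assoc]; push_cast; ring
  rw [hfactor, norm_mul, Complex.norm_real, Real.norm_eq_abs, norm_div, Complex.norm_natCast]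
  calc ‖z‖ / d * |harmonicIco (T / d) (2 * (T / d)) - log 2| ≤ ‖z‖ / d * √(2 / (T / d)) := by
        gcongr; exact abs_harmonicIco_two_mul_sub_log_two_le_sqrt hx
    _ = √2 / √T * (‖z‖ / √d) := by
        rw [div_div_eq_mul_div, Real.sqrt_div' _ hT.le, Real.sqrt_mul zero_le_two]
        field_simp
        rw [Real.sq_sqrt hd'.le]

theorem dyadic_sum_dirichlet_convolution_div :
    ∃ C > 0, ∀ (ξ : ℕ → ℂ) (M : ℝ),
      Summable (fun n : ℕ => ‖ξ n‖ / Real.sqrt n) →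
      (∑' n : ℕ, ‖ξ n‖ / Real.sqrt n) ≤ M →
      ∀ T : ℝ, 1 ≤ T →
      ‖(∑ n ∈ Finset.Ico ⌈T⌉₊ ⌈2 * T⌉₊,
            (∑ d ∈ n.divisors, ξ d) / (n : ℂ))
          - (Real.log 2 : ℂ) * ∑' n : ℕ, ξ n / (n : ℂ)‖
        ≤ C * M / Real.sqrt T := by
  refine ⟨√2, by positivity, fun ξ M hsum hM T hT => ?_⟩
  have hT0 : 0 < T := by linarith
  have hconvolution := hasSum_div_mul_harmonicIco hT0 (2 * T) ξ
  have hsummable : Summable fun n : ℕ => ξ n / n :=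
    hsum.of_norm_bounded fun n => norm_div_natCast_le_div_sqrt (ξ n) n
  calc _ ≤ √2 / √T * ∑' n : ℕ, ‖ξ n‖ / √n :=
        (hconvolution.sub (hsummable.hasSum.mul_left _)).norm_le_of_bounded
          (hsum.hasSum.mul_left _) fun d => norm_div_mul_harmonicIco_sub_log_two_mul_le _ hT0 d
    _ ≤ √2 / √T * M := by gcongr
    _ = √2 * M / √T := by ring
end

section
/- For every positive integer m and every n ≥ 1, the indicator-weighted squarefree function satisfies the convolution identity μ(n)² · 1_{gcd(n,m)=1} = Σ_{d | gcd(n, m^∞)} λ(d) μ(n/d)², where λ is the Liouville function and d | m^∞ means every prime factor of d divides m. Here the sum is over divisors d of n all of whose prime factors divide m, and the term μ(n/d)² is interpreted as 0 when d ∤ n. -/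
open scoped ArithmeticFunction
open scoped ArithmeticFunction.Moebius ArithmeticFunction.Omega
open scoped Classical

/-!
Both sides are multiplicative in `n`: the left side is `μ²` restricted to the `n` coprime to `m`,
the right side is the Dirichlet convolution of `μ²` with `λ` restricted to the `d ∣ m^∞`, so it
suffices to compare them at prime powers `p ^ i`. If `p ∤ m`, only `d = 1` divides `m^∞` and both
sides equal `μ(p ^ i)²`. If `p ∣ m`, every divisor of `p ^ i` divides `m^∞`, so the right side is
`(λ * μ²)(p ^ i)`, which vanishes for `i ≥ 1` because `μ²` is the Dirichlet inverse of `λ`.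
-/

theorem Nat.forall_prime_dvd_mul_imp_dvd_iff {a b m : ℕ} :
    (∀ p : ℕ, p.Prime → p ∣ a * b → p ∣ m) ↔
      (∀ p : ℕ, p.Prime → p ∣ a → p ∣ m) ∧ (∀ p : ℕ, p.Prime → p ∣ b → p ∣ m) :=
  ⟨fun h => ⟨fun p hp hpa => h p hp (hpa.mul_right b), fun p hp hpb => h p hp (hpb.mul_left a)⟩,
    fun ⟨ha, hb⟩ p hp hpab => (hp.dvd_mul.mp hpab).elim (ha p hp) (hb p hp)⟩

theorem Nat.forall_prime_dvd_prime_pow_imp_dvd_iff {p m : ℕ} (hp : p.Prime) (j : ℕ) :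
    (∀ q : ℕ, q.Prime → q ∣ p ^ j → q ∣ m) ↔ j = 0 ∨ p ∣ m := by
  refine ⟨fun h => or_iff_not_imp_left.mpr fun hj => h p hp (dvd_pow_self p hj), ?_⟩
  rintro (rfl | hpm) q hq hqp
  · exact absurd (Nat.dvd_one.mp (pow_zero p ▸ hqp)) hq.ne_one
  · rwa [(Nat.prime_dvd_prime_iff_eq hq hp).mp (hq.dvd_of_dvd_pow hqp)]

namespace ArithmeticFunction

variable {R : Type*}

def restrict [Zero R] (P : ℕ → Prop) [DecidablePred P] (f : ArithmeticFunction R) :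
    ArithmeticFunction R :=
  ⟨fun n => if P n then f n else 0, by split_ifs <;> simp⟩

theorem restrict_apply [Zero R] (P : ℕ → Prop) [DecidablePred P] (f : ArithmeticFunction R)
    (n : ℕ) : f.restrict P n = if P n then f n else 0 := rfl

theorem IsMultiplicative.restrict [MonoidWithZero R] {f : ArithmeticFunction R}
    (hf : f.IsMultiplicative) {P : ℕ → Prop} [DecidablePred P] (h1 : P 1)
    (hP : ∀ {a b : ℕ}, a.Coprime b → (P (a * b) ↔ P a ∧ P b)) :
    (f.restrict P).IsMultiplicative := by
  refine ⟨by simp [restrict_apply, h1, hf.map_one], fun {a b} hab => ?_⟩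
  simp only [restrict_apply, hP hab, hf.map_mul_of_coprime hab]
  by_cases ha : P a <;> by_cases hb : P b <;> simp [ha, hb]

theorem mul_apply_congr_left [Semiring R] {f f' : ArithmeticFunction R} {n : ℕ}
    (h : ∀ d ∈ n.divisors, f d = f' d) (g : ArithmeticFunction R) :
    (f * g) n = (f' * g) n := by
  simp only [mul_apply]
  exact Finset.sum_congr rfl fun x hx => by
    rw [h x.1 (Nat.fst_mem_divisors_of_mem_antidiagonal hx)]

theorem liouville_mul_pmul_moebius_moebius : liouville * pmul μ μ = 1 := by
  rw [IsMultiplicative.eq_iff_eq_on_prime_powers _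
    (isMultiplicative_liouville.mul (isMultiplicative_moebius.pmul isMultiplicative_moebius)) _
    isMultiplicative_one]
  intro p i hp
  rcases i with _ | k
  · simp [liouville_apply_one]
  rw [mul_apply, Nat.sum_divisorsAntidiagonal (fun x y => liouville x * pmul μ μ y),
    Nat.sum_divisors_prime_pow hp, Finset.sum_range_succ, Finset.sum_range_succ]
  have hpow : ∀ j ≤ k + 1, p ^ (k + 1) / p ^ j = p ^ (k + 1 - j) := fun j hj =>
    Nat.pow_div hj hp.pos
  have hvanish : ∀ j ∈ Finset.range k,
      liouville (p ^ j) * pmul μ μ (p ^ (k + 1) / p ^ j) = 0 := by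
    intro j hj
    have hjk : j < k := Finset.mem_range.mp hj
    rw [hpow j (by omega), pmul_apply, moebius_apply_prime_pow hp (by omega),
      if_neg (by omega), mul_zero, mul_zero]
  rw [Finset.sum_eq_zero hvanish, hpow k (by omega), hpow (k + 1) le_rfl,
    one_apply_ne (Nat.one_lt_pow k.succ_ne_zero hp.one_lt).ne', Nat.add_sub_cancel_left,
    Nat.sub_self, pow_one, pow_zero, liouville_apply (pow_ne_zero _ hp.ne_zero),
    liouville_apply (pow_ne_zero _ hp.ne_zero), cardFactors_apply_prime_pow hp,
    cardFactors_apply_prime_pow hp, pmul_apply, pmul_apply, moebius_apply_prime hp,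
    moebius_apply_one]
  ring

theorem restrict_coprime_pmul_moebius_moebius (m : ℕ) :
    (pmul μ μ).restrict (·.Coprime m)
      = liouville.restrict (fun d => ∀ p : ℕ, p.Prime → p ∣ d → p ∣ m) * pmul μ μ := by
  have hμ2 := isMultiplicative_moebius.pmul isMultiplicative_moebius
  have hcop := hμ2.restrict (P := (·.Coprime m)) (Nat.coprime_one_left m)
    fun _ => Nat.coprime_mul_iff_left
  have hsmooth := isMultiplicative_liouville.restrict
    (P := fun d => ∀ p : ℕ, p.Prime → p ∣ d → p ∣ m)
    (fun p hp hp1 => absurd (Nat.dvd_one.mp hp1) hp.ne_one)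
    fun _ => Nat.forall_prime_dvd_mul_imp_dvd_iff
  rw [IsMultiplicative.eq_iff_eq_on_prime_powers _ hcop _ (hsmooth.mul hμ2)]
  intro p i hp
  rcases eq_or_ne i 0 with rfl | hi
  · rw [pow_zero, hcop.map_one, (hsmooth.mul hμ2).map_one]
  by_cases hpm : p ∣ m
  · rw [restrict_apply,
      if_neg (Nat.not_coprime_of_dvd_of_dvd hp.one_lt (dvd_pow_self p hi) hpm),
      mul_apply_congr_left (f' := liouville) ?_, liouville_mul_pmul_moebius_moebius,
      one_apply_ne (Nat.one_lt_pow hi hp.one_lt).ne']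
    intro d hd
    obtain ⟨j, -, rfl⟩ := (Nat.mem_divisors_prime_pow hp i).mp hd
    rw [restrict_apply,
      if_pos ((Nat.forall_prime_dvd_prime_pow_imp_dvd_iff hp j).mpr (.inr hpm))]
  · rw [restrict_apply, if_pos ((hp.coprime_iff_not_dvd.mpr hpm).pow_left i),
      mul_apply_congr_left (f' := 1) ?_, one_mul]
    intro d hd
    obtain ⟨j, -, rfl⟩ := (Nat.mem_divisors_prime_pow hp i).mp hd
    rw [restrict_apply, Nat.forall_prime_dvd_prime_pow_imp_dvd_iff hp j, or_iff_left hpm]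
    rcases eq_or_ne j 0 with rfl | hj
    · rw [if_pos rfl, pow_zero, liouville_apply_one, one_one]
    · rw [if_neg hj, one_apply_ne (Nat.one_lt_pow hj hp.one_lt).ne']

end ArithmeticFunction

open ArithmeticFunction

theorem moebius_sq_coprime_convolution_general (n m : ℕ) :
    (if Nat.Coprime n m then (μ n) ^ 2 else 0)
      = ∑ d ∈ n.divisors.filter (fun d => ∀ p : ℕ, p.Prime → p ∣ d → p ∣ m),
          (-1 : ℤ) ^ (Ω d) * (μ (n / d)) ^ 2 := by
  have hlhs : (if Nat.Coprime n m then (μ n) ^ 2 else 0)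
      = (pmul μ μ).restrict (·.Coprime m) n := by
    rw [restrict_apply, pmul_apply, sq]
  rw [hlhs, restrict_coprime_pmul_moebius_moebius, mul_apply,
    Nat.sum_divisorsAntidiagonal (fun x y => liouville.restrict _ x * pmul μ μ y),
    Finset.sum_filter]
  refine Finset.sum_congr rfl fun d hd => ?_
  rw [restrict_apply, pmul_apply, ← sq, liouville_apply (Nat.pos_of_mem_divisors hd).ne',
    ite_mul, zero_mul]

/-- Convolution identity: `μ(n)² 1_{(n,m)=1} = Σ_{d | (n, m^∞)} λ(d) μ(n/d)²`,
where the sum runs over divisors `d` of `n` all of whose prime factors divide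
`m`, and `λ(d) = (-1)^Ω(d)` is the Liouville function. -/
theorem moebius_sq_coprime_convolution (n m : ℕ) (hn : 0 < n) (hm : 0 < m) :
    (if Nat.Coprime n m then (μ n) ^ 2 else 0)
      = ∑ d ∈ n.divisors.filter (fun d => ∀ p : ℕ, p.Prime → p ∣ d → p ∣ m),
          (-1 : ℤ) ^ (Ω d) * (μ (n / d)) ^ 2 :=
  moebius_sq_coprime_convolution_general n m
end

section
/- For Re(s) > 1, Σ_{n≥1} μ(n)² n² / (φ(n)² n^s) = Π_p (1 + (2 − 1/p)/((1−1/p)² p (p^s + 1))) · Σ_{n≥1} μ(n)²/n^s, an identity of Euler products/Dirichlet series. -/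
/-!
Both series have multiplicative coefficients supported on squarefree numbers, so each is its
Euler product `∏ p, (1 + a p)`, and absolute convergence follows from that of `∑ p, ‖a p‖`.
With `X = p ^ s`, the factors satisfy
`1 + p² / ((p - 1)² X) = (1 + (2p - 1) / ((p - 1)² (X + 1))) (1 + 1 / X)`,
and the Euler product of `μ(n)² n⁻ˢ` converges absolutely with no vanishing factor, hence is
nonzero, so the two products may be divided.
-/

open scoped ArithmeticFunction
open scoped ArithmeticFunction.Moebius

open Nat Finset LSeries ArithmeticFunction

structure IsSquarefreeMultiplicative {K : Type*} [NormedField K] (f : ℕ → K) : Prop where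
  map_zero : f 0 = 0
  map_one : f 1 = 1
  map_mul_of_coprime {m n : ℕ} : m.Coprime n → f (m * n) = f m * f n
  map_prime_pow {p e : ℕ} : p.Prime → 2 ≤ e → f (p ^ e) = 0

namespace IsSquarefreeMultiplicative

variable {K : Type*} [NormedField K] {f : ℕ → K}

lemma norm (hf : IsSquarefreeMultiplicative f) : IsSquarefreeMultiplicative (‖f ·‖) where
  map_zero := by simp [hf.map_zero]
  map_one := by simp [hf.map_one]
  map_mul_of_coprime h := by simp [hf.map_mul_of_coprime h]
  map_prime_pow hp he := by simp [hf.map_prime_pow hp he]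

lemma tsum_prime_pow_eq (hf : IsSquarefreeMultiplicative f) {p : ℕ} (hp : p.Prime) :
    ∑' e, f (p ^ e) = 1 + f p := by
  rw [tsum_eq_sum (s := range 2) fun e he ↦ hf.map_prime_pow hp (by simp at he; omega)]
  simp [sum_range_succ, hf.map_one]

lemma summable_norm_prime_pow (hf : IsSquarefreeMultiplicative f) {p : ℕ} (hp : p.Prime) :
    Summable fun e ↦ ‖f (p ^ e)‖ :=
  summable_of_ne_finset_zero (s := range 2) fun e he ↦ by
    rw [hf.map_prime_pow hp (by simp at he; omega), norm_zero]

/-- Every partial sum is bounded by a finite Euler product `∏ (1 + F p) ≤ exp (∑' p, F p)`. -/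
lemma summable_of_summable_primes {F : ℕ → ℝ} (hF : IsSquarefreeMultiplicative F)
    (hF₀ : ∀ n, 0 ≤ F n) (hprimes : Summable fun p : Primes ↦ F p) : Summable F := by
  refine summable_of_sum_le hF₀ (c := Real.exp (∑' p : Primes, F p)) fun u ↦ ?_
  set N := u.sup id + 1
  obtain ⟨-, hsmooth⟩ := EulerProduct.summable_and_hasSum_smoothNumbers_prod_primesBelow_tsum
    hF.map_one hF.map_mul_of_coprime hF.summable_norm_prime_pow N
  calc ∑ n ∈ u, F n = ∑ n ∈ u, N.smoothNumbers.indicator F n := by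
        refine sum_congr rfl fun n hn ↦ ?_
        rcases eq_or_ne n 0 with rfl | hn₀
        · simp [Set.indicator, hF.map_zero]
        · exact (Set.indicator_of_mem (mem_smoothNumbers_of_lt (pos_of_ne_zero hn₀)
            (lt_succ_of_le (le_sup (f := id) hn))) F).symm
    _ ≤ ∏ p ∈ N.primesBelow, ∑' e, F (p ^ e) :=
        sum_le_hasSum u (fun n _ ↦ Set.indicator_nonneg (fun n _ ↦ hF₀ n) n)
          (hasSum_subtype_iff_indicator.mp hsmooth)
    _ = ∏ p ∈ N.primesBelow, (1 + F p) :=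
        prod_congr rfl fun p hp ↦ hF.tsum_prime_pow_eq (prime_of_mem_primesBelow hp)
    _ ≤ ∏ p ∈ N.primesBelow, Real.exp (F p) :=
        prod_le_prod (fun p _ ↦ by linarith [hF₀ p]) fun p _ ↦ by
          linarith [Real.add_one_le_exp (F p)]
    _ = Real.exp (∑ p ∈ N.primesBelow.subtype Nat.Prime, F p) := by
        rw [Real.exp_sum]
        exact (prod_subtype_of_mem _ fun p ↦ prime_of_mem_primesBelow).symm
    _ ≤ Real.exp (∑' p : Primes, F p) :=
        Real.exp_le_exp.mpr <| hprimes.sum_le_tsum (ι := Primes) _ fun p _ ↦ hF₀ p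

lemma summable_norm (hf : IsSquarefreeMultiplicative f)
    (hprimes : Summable fun p : Primes ↦ ‖f p‖) : Summable (‖f ·‖) :=
  hf.norm.summable_of_summable_primes (fun _ ↦ norm_nonneg _) hprimes

lemma hasProd_one_add [CompleteSpace K] (hf : IsSquarefreeMultiplicative f)
    (hprimes : Summable fun p : Primes ↦ ‖f p‖) :
    HasProd (fun p : Primes ↦ 1 + f p) (∑' n, f n) := by
  convert EulerProduct.eulerProduct_hasProd hf.map_one hf.map_mul_of_coprime
      (hf.summable_norm hprimes) hf.map_zero using 2 with p
  exact (hf.tsum_prime_pow_eq p.prop).symm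

theorem tsum_eq_tprod_mul_tsum [CompleteSpace K] {g : ℕ → K} {c : Primes → K}
    (hf : IsSquarefreeMultiplicative f) (hg : IsSquarefreeMultiplicative g)
    (hfp : Summable fun p : Primes ↦ ‖f p‖) (hgp : Summable fun p : Primes ↦ ‖g p‖)
    (hg_ne : ∀ p : Primes, 1 + g p ≠ 0) (hc : ∀ p : Primes, 1 + f p = c p * (1 + g p)) :
    ∑' n, f n = (∏' p, c p) * ∑' n, g n := by
  have hG := hg.hasProd_one_add hgp
  have hG_ne : ∑' n, g n ≠ 0 := hG.tprod_eq ▸ tprod_one_add_ne_zero_of_summable hg_ne hgp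
  have hC : HasProd c ((∑' n, f n) * (∑' n, g n)⁻¹) := by
    convert (hf.hasProd_one_add hfp).mul (hG.inv₀ hG_ne) using 1
    ext p
    rw [hc, mul_inv_cancel_right₀ (hg_ne p)]
  rw [hC.tprod_eq, inv_mul_cancel_right₀ hG_ne]

lemma mul {h : ℕ → K} (hf : IsSquarefreeMultiplicative f) (h₁ : h 1 = 1)
    (hmul : ∀ {m n : ℕ}, m.Coprime n → h (m * n) = h m * h n) :
    IsSquarefreeMultiplicative fun n ↦ f n * h n where
  map_zero := by simp [hf.map_zero]
  map_one := by simp [hf.map_one, h₁]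
  map_mul_of_coprime hmn := by rw [hf.map_mul_of_coprime hmn, hmul hmn]; ring
  map_prime_pow hp he := by simp [hf.map_prime_pow hp he]

lemma term {c : ℕ → ℂ} (hc : IsSquarefreeMultiplicative c) (s : ℂ) :
    IsSquarefreeMultiplicative (term c s) where
  map_zero := term_zero c s
  map_one := by simp [hc.map_one]
  map_mul_of_coprime {m n} hmn := by
    rcases eq_or_ne m 0 with rfl | hm
    · simp
    rcases eq_or_ne n 0 with rfl | hn
    · simp
    rw [term_of_ne_zero (mul_ne_zero hm hn), term_of_ne_zero hm, term_of_ne_zero hn,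
      hc.map_mul_of_coprime hmn, Nat.cast_mul, Complex.natCast_mul_natCast_cpow,
      mul_div_mul_comm]
  map_prime_pow hp he := by simp [LSeries.term_def, hc.map_prime_pow hp he]

end IsSquarefreeMultiplicative

lemma isSquarefreeMultiplicative_moebius_sq :
    IsSquarefreeMultiplicative fun n ↦ ((μ n : ℂ)) ^ 2 where
  map_zero := by simp
  map_one := by simp
  map_mul_of_coprime hmn := by
    rw [isMultiplicative_moebius.map_mul_of_coprime hmn]; push_cast; ring
  map_prime_pow hp he := by
    rw [moebius_apply_prime_pow hp (by omega), if_neg (by omega)]; simp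

lemma natCast_div_totient_sq_mul {m n : ℕ} (hmn : m.Coprime n) :
    ((↑(m * n) : ℂ) / φ (m * n)) ^ 2 = ((m : ℂ) / φ m) ^ 2 * ((n : ℂ) / φ n) ^ 2 := by
  rw [totient_mul hmn]; push_cast; ring

lemma summable_norm_term_primes {c : ℕ → ℂ} {C : ℝ} (hc : ∀ p : Primes, ‖c p‖ ≤ C)
    {s : ℂ} (hs : 1 < s.re) : Summable fun p : Primes ↦ ‖term c s p‖ := by
  have hone : Summable fun n ↦ ‖term 1 s n‖ :=
    summable_norm_iff.mpr (LSeriesSummable_one_iff.mpr hs)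
  refine ((hone.mul_left C).comp_injective Subtype.val_injective).of_nonneg_of_le
    (fun _ ↦ norm_nonneg _) fun p ↦ ?_
  change ‖term c s p‖ ≤ C * ‖term 1 s p‖
  simp only [norm_term_eq, if_neg p.prop.ne_zero, Pi.one_apply, norm_one, mul_one_div]
  gcongr
  exact hc p

lemma natCast_cpow_ne_zero {n : ℕ} (hn : n ≠ 0) (s : ℂ) : (n : ℂ) ^ s ≠ 0 :=
  Complex.cpow_ne_zero_iff.mpr (Or.inl (Nat.cast_ne_zero.mpr hn))

lemma natCast_cpow_add_one_ne_zero {n : ℕ} (hn : 1 < n) {s : ℂ} (hs : 0 < s.re) :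
    (n : ℂ) ^ s + 1 ≠ 0 := by
  intro h
  have h₁ := congrArg norm (eq_neg_of_add_eq_zero_left h)
  rw [norm_neg, norm_one, Complex.norm_natCast_cpow_of_pos (by omega)] at h₁
  exact (Real.one_lt_rpow (by exact_mod_cast hn) hs).ne' h₁

lemma one_add_div_sub_one_sq_div {K : Type*} [Field K] {P X : K} (hP : P ≠ 0)
    (hP₁ : P - 1 ≠ 0) (hX : X ≠ 0) (hX₁ : X + 1 ≠ 0) :
    1 + (P / (P - 1)) ^ 2 / X
      = (1 + (2 - 1 / P) / ((1 - 1 / P) ^ 2 * P * (X + 1))) * (1 + 1 / X) := by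
  have hP₁' : 1 - 1 / P ≠ 0 := by rwa [one_sub_div hP, div_ne_zero_iff, and_iff_left hP]
  field_simp
  ring

section Primes

variable {s : ℂ} {p : ℕ}

lemma term_moebius_sq_prime (hp : p.Prime) :
    term (fun n ↦ ((μ n : ℂ)) ^ 2) s p = 1 / (p : ℂ) ^ s := by
  simp [term_of_ne_zero hp.ne_zero, moebius_apply_prime hp]

lemma term_moebius_sq_mul_div_totient_sq_prime (hp : p.Prime) :
    term (fun n ↦ ((μ n : ℂ)) ^ 2 * ((n : ℂ) / φ n) ^ 2) s p
      = ((p : ℂ) / (p - 1)) ^ 2 / (p : ℂ) ^ s := by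
  simp [term_of_ne_zero hp.ne_zero, moebius_apply_prime hp,
    totient_prime hp, Nat.cast_sub hp.one_le]

lemma norm_moebius_sq_mul_div_totient_sq_prime_le (hp : p.Prime) :
    ‖((μ p : ℂ)) ^ 2 * ((p : ℂ) / φ p) ^ 2‖ ≤ 4 := by
  have hp₁ : (1 : ℝ) ≤ p - 1 := by
    linarith [show (2 : ℝ) ≤ p by exact_mod_cast hp.two_le]
  simp only [moebius_apply_prime hp, totient_prime hp, norm_mul, norm_pow,
    norm_div, Complex.norm_natCast]
  rw [Nat.cast_sub hp.one_le, Int.cast_neg, Int.cast_one, norm_neg, norm_one, one_pow, one_mul,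
    div_pow, Nat.cast_one, div_le_iff₀ (pow_pos (by linarith) 2)]
  nlinarith

lemma one_add_term_moebius_sq_prime_ne_zero (hs : 0 < s.re) (hp : p.Prime) :
    1 + term (fun n ↦ ((μ n : ℂ)) ^ 2) s p ≠ 0 := by
  rw [term_moebius_sq_prime hp, one_add_div (natCast_cpow_ne_zero hp.ne_zero s)]
  exact div_ne_zero (natCast_cpow_add_one_ne_zero hp.one_lt hs) (natCast_cpow_ne_zero hp.ne_zero s)

lemma one_add_term_moebius_sq_mul_div_totient_sq_prime (hs : 0 < s.re) (hp : p.Prime) :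
    1 + term (fun n ↦ ((μ n : ℂ)) ^ 2 * ((n : ℂ) / φ n) ^ 2) s p
      = (1 + (2 - 1 / (p : ℂ)) / ((1 - 1 / (p : ℂ)) ^ 2 * p * ((p : ℂ) ^ s + 1)))
        * (1 + term (fun n ↦ ((μ n : ℂ)) ^ 2) s p) := by
  rw [term_moebius_sq_prime hp, term_moebius_sq_mul_div_totient_sq_prime hp]
  exact one_add_div_sub_one_sq_div (by exact_mod_cast hp.ne_zero)
    (sub_ne_zero.mpr (by exact_mod_cast hp.one_lt.ne')) (natCast_cpow_ne_zero hp.ne_zero s)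
    (natCast_cpow_add_one_ne_zero hp.one_lt hs)

end Primes

theorem dirichlet_series_moebius_sq_mul_sq_div_totient_sq (s : ℂ) (hs : 1 < s.re) :
    (∑' n : ℕ, if n = 0 then 0 else
        ((μ n : ℂ)) ^ 2 * (n : ℂ) ^ 2 / ((Nat.totient n : ℂ) ^ 2 * (n : ℂ) ^ s))
      = (∏' p : Nat.Primes,
            (1 + (2 - 1 / ((p : ℕ) : ℂ)) /
              ((1 - 1 / ((p : ℕ) : ℂ)) ^ 2 * ((p : ℕ) : ℂ) * (((p : ℕ) : ℂ) ^ s + 1))))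
        * ∑' n : ℕ, if n = 0 then 0 else ((μ n : ℂ)) ^ 2 / (n : ℂ) ^ s := by
  have hg := isSquarefreeMultiplicative_moebius_sq.term s
  have hf := (isSquarefreeMultiplicative_moebius_sq.mul (h := fun n ↦ ((n : ℂ) / φ n) ^ 2)
    (by simp) natCast_div_totient_sq_mul).term s
  have hLHS : (∑' n : ℕ, if n = 0 then 0 else
      ((μ n : ℂ)) ^ 2 * (n : ℂ) ^ 2 / ((Nat.totient n : ℂ) ^ 2 * (n : ℂ) ^ s))
      = ∑' n, term (fun n ↦ ((μ n : ℂ)) ^ 2 * ((n : ℂ) / φ n) ^ 2) s n := by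
    refine tsum_congr fun n ↦ ?_
    rcases eq_or_ne n 0 with rfl | hn
    · simp
    · rw [term_of_ne_zero hn, if_neg hn]; ring
  rw [hLHS]
  change _ = _ * ∑' n, term (fun n ↦ ((μ n : ℂ)) ^ 2) s n
  exact hf.tsum_eq_tprod_mul_tsum hg
    (summable_norm_term_primes (fun p ↦ norm_moebius_sq_mul_div_totient_sq_prime_le p.prop) hs)
    (summable_norm_term_primes (C := 1)
      (fun p ↦ by simp [moebius_apply_prime p.prop]) hs)
    (fun p ↦ one_add_term_moebius_sq_prime_ne_zero (by linarith) p.prop)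
    (fun p ↦ one_add_term_moebius_sq_mul_div_totient_sq_prime (by linarith) p.prop)
end
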